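/- arXiv:1902.02852 — 8 statements merged into one kernel-verified Lean document; each statement's English description precedes it below -/
import Mathlib

section
/- Let p ∈ (0,1) and let X₁,…,Xₙ be independent, identically distributed geometric random variables with Pr[X = k] = p(1−p)^k for k = 0,1,2,…, and let μ = (1−p)/p be their common mean. Let X̄ₙ = (X₁+⋯+Xₙ)/n. Then for every λ > 1, Pr[X̄ₙ ≥ λμ] ≤ exp(−n·H(λ,μ)), where H(λ,μ) = μλ·ln λ − (1+μλ)·ln((1+μλ)/(1+μ)). -/
/-!
Chernoff's bound: for `t ≥ 0`, `P[X₁ + ⋯ + Xₙ ≥ nλμ] ≤ (e^{-tλμ} M(t))ⁿ`, where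
`M(t) = p / (1 - (1 - p) eᵗ)` is the moment generating function of the geometric law.
The optimal tilt `eᵗ = λ(1 + μ) / (1 + μλ)` (which is `≥ 1` as `λ ≥ 1`) gives
`(1 - p) eᵗ = μλ / (1 + μλ)` and `M(t) = (1 + μλ) / (1 + μ)`, and then
`e^{-tλμ} M(t) = exp (-H(λ, μ))`.
-/

open MeasureTheory ProbabilityTheory Real

namespace ProbabilityTheory

section Geometric

variable {p : unitInterval}

lemma map_eq_geometricMeasure {Ω : Type*} [MeasurableSpace Ω] {P : Measure Ω} {X : Ω → ℕ}
    (hX : Measurable X) (hp : p ≠ 0)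
    (hlaw : ∀ k, P {ω | X ω = k} = ENNReal.ofReal (p * (1 - p) ^ k)) :
    P.map X = geometricMeasure p := by
  refine Measure.ext_of_singleton fun k => ?_
  rw [Measure.map_apply hX (measurableSet_singleton k), geometricMeasure_singleton hp, mul_comm]
  exact hlaw k

lemma geometric_weight_mul_exp (t : ℝ) (n : ℕ) :
    (1 - p : ℝ) ^ n * p * exp (t * n) = p * ((1 - p) * exp t) ^ n := by
  rw [mul_pow, ← exp_nat_mul, mul_comm t]
  ring

lemma integrable_exp_mul_geometricMeasure (hp : p ≠ 0) {t : ℝ} (ht : (1 - p) * exp t < 1) :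
    Integrable (fun n : ℕ => exp (t * n)) (geometricMeasure p) := by
  rw [integrable_geometricMeasure_iff hp]
  simp only [norm_eq_abs, abs_exp, geometric_weight_mul_exp]
  exact (summable_geometric_of_lt_one (by have := p.2.2; positivity) ht).mul_left (p : ℝ)

lemma mgf_geometricMeasure (hp : p ≠ 0) {t : ℝ} (ht : (1 - p) * exp t < 1) :
    mgf (fun n : ℕ => (n : ℝ)) (geometricMeasure p) t = p / (1 - (1 - p) * exp t) := by
  rw [mgf, integral_geometricMeasure hp]
  simp only [smul_eq_mul, geometric_weight_mul_exp]
  rw [tsum_mul_left, tsum_geometric_of_lt_one (by have := p.2.2; positivity) ht, div_eq_mul_inv]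

variable {Ω : Type*} [MeasurableSpace Ω] {P : Measure Ω} {X : Ω → ℕ} {t : ℝ}

lemma integrable_exp_mul_of_map_eq_geometricMeasure (hX : Measurable X)
    (hlaw : P.map X = geometricMeasure p) (hp : p ≠ 0) (ht : (1 - p) * exp t < 1) :
    Integrable (fun ω => exp (t * X ω)) P := by
  have := integrable_exp_mul_geometricMeasure hp ht
  rwa [← hlaw, integrable_map_measure (by fun_prop) hX.aemeasurable] at this

lemma mgf_of_map_eq_geometricMeasure (hX : Measurable X) (hlaw : P.map X = geometricMeasure p)
    (hp : p ≠ 0) (ht : (1 - p) * exp t < 1) :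
    mgf (fun ω => (X ω : ℝ)) P t = p / (1 - (1 - p) * exp t) := by
  rw [← mgf_geometricMeasure hp ht, ← hlaw, mgf_map hX.aemeasurable (by fun_prop)]
  rfl

end Geometric

theorem measure_sum_ge_le_pow_of_iIndepFun {Ω ι : Type*} [MeasurableSpace Ω] {P : Measure Ω}
    [Fintype ι] {Y : ι → Ω → ℝ} (hindep : iIndepFun Y P) (hmeas : ∀ i, Measurable (Y i))
    {t M : ℝ} (ht : 0 ≤ t) (hint : ∀ i, Integrable (fun ω => exp (t * Y i ω)) P)
    (hmgf : ∀ i, mgf (Y i) P t = M) (a : ℝ) :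
    P.real {ω | Fintype.card ι * a ≤ ∑ i, Y i ω} ≤ (exp (-t * a) * M) ^ Fintype.card ι := by
  have := hindep.isProbabilityMeasure
  have hchernoff := measure_ge_le_exp_mul_mgf (X := ∑ i, Y i) (Fintype.card ι * a) ht
    (hindep.integrable_exp_mul_sum hmeas fun i _ => hint i)
  simp only [Finset.sum_apply] at hchernoff
  rw [hindep.mgf_sum hmeas, Finset.prod_congr rfl fun i _ => hmgf i, Finset.prod_const,
    Finset.card_univ] at hchernoff
  refine hchernoff.trans_eq ?_
  rw [mul_pow, ← exp_nat_mul]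
  ring_nf

lemma setOf_le_sum_div_subset {Ω : Type*} {n : ℕ} (Y : Fin n → Ω → ℝ) (a : ℝ) :
    {ω | a ≤ (∑ i, Y i ω) / n} ⊆ {ω | Fintype.card (Fin n) * a ≤ ∑ i, Y i ω} := by
  intro ω hω
  rcases n.eq_zero_or_pos with rfl | hn
  · simp
  · simp only [Set.mem_ofPred_eq, Fintype.card_fin] at hω ⊢
    rwa [← le_div_iff₀' (by positivity)]

end ProbabilityTheory

/-- `H(λ, μ)`. -/
noncomputable def geometricTailRate (mu lam : ℝ) : ℝ :=
  mu * lam * log lam - (1 + mu * lam) * log ((1 + mu * lam) / (1 + mu))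

section Tilt

variable {p mu lam : ℝ}

lemma one_sub_mul_exp_log_tilt (hp : p ∈ Set.Ioo 0 1) (hmu : mu = (1 - p) / p) (hlam : 0 < lam) :
    (1 - p) * exp (log (lam * (1 + mu) / (1 + mu * lam))) = mu * lam / (1 + mu * lam) := by
  obtain ⟨hp0, hp1⟩ := hp
  have hmu0 : 0 < mu := hmu ▸ div_pos (by linarith) hp0
  rw [exp_log (by positivity), hmu]
  field_simp
  ring

lemma geometric_mgf_at_tilt (hp : p ∈ Set.Ioo 0 1) (hmu : mu = (1 - p) / p) (hlam : 0 < lam) :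
    p / (1 - mu * lam / (1 + mu * lam)) = (1 + mu * lam) / (1 + mu) := by
  obtain ⟨hp0, hp1⟩ := hp
  have hmu0 : 0 < mu := hmu ▸ div_pos (by linarith) hp0
  have hsum : 1 + mu = 1 / p := by
    rw [hmu]
    field_simp
    ring
  rw [hsum]
  field_simp
  ring

lemma exp_neg_log_tilt_mul (hmu : 0 < mu) (hlam : 0 < lam) :
    exp (-log (lam * (1 + mu) / (1 + mu * lam)) * (lam * mu)) * ((1 + mu * lam) / (1 + mu)) =
      exp (-geometricTailRate mu lam) := by
  have hc : 0 < (1 + mu * lam) / (1 + mu) := by positivity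
  have hratio : lam * (1 + mu) / (1 + mu * lam) = lam / ((1 + mu * lam) / (1 + mu)) := by
    field_simp
  rw [hratio, log_div hlam.ne' hc.ne']
  nth_rw 2 [← exp_log hc]
  rw [← exp_add, geometricTailRate]
  ring_nf

lemma one_le_tilt_ratio (hmu : 0 < mu) (hlam : 1 ≤ lam) : 1 ≤ lam * (1 + mu) / (1 + mu * lam) := by
  rw [one_le_div (by positivity)]
  nlinarith

end Tilt

theorem geometric_upper_tail
    {Omega : Type*} [MeasurableSpace Omega] (P : Measure Omega) [IsProbabilityMeasure P]
    (p : ℝ) (hp : p ∈ Set.Ioo (0 : ℝ) 1) (n : ℕ)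
    (X : Fin n → Omega → ℕ)
    (hmeas : ∀ i, Measurable (X i))
    (hindep : iIndepFun X P)
    (hdist : ∀ i k, P {omega | X i omega = k} = ENNReal.ofReal (p * (1 - p) ^ k))
    (mu : ℝ) (hmu : mu = (1 - p) / p)
    (lam : ℝ) (hlam : 1 < lam) :
    (P {omega | lam * mu ≤ (∑ i, (X i omega : ℝ)) / n}).toReal ≤
      Real.exp (-(n : ℝ) * (mu * lam * Real.log lam - (1 + mu * lam) * Real.log ((1 + mu * lam) / (1 + mu)))) := by
  have hmu0 : 0 < mu := hmu ▸ div_pos (by linarith [hp.2]) hp.1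
  have hlam0 : 0 < lam := by linarith
  let q : unitInterval := ⟨p, hp.1.le, hp.2.le⟩
  have hq : q ≠ 0 := fun h => hp.1.ne' congr(($h : ℝ))
  have hlaw i : P.map (X i) = geometricMeasure q := map_eq_geometricMeasure (hmeas i) hq (hdist i)
  set t := log (lam * (1 + mu) / (1 + mu * lam))
  have htilt : (1 - q : ℝ) * exp t = mu * lam / (1 + mu * lam) :=
    one_sub_mul_exp_log_tilt hp hmu hlam0
  have htilt_lt : (1 - q : ℝ) * exp t < 1 := by
    rw [htilt, div_lt_one (by positivity)]
    linarith
  have hmgf i : mgf (fun ω => (X i ω : ℝ)) P t = (1 + mu * lam) / (1 + mu) := by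
    rw [mgf_of_map_eq_geometricMeasure (hmeas i) (hlaw i) hq htilt_lt, htilt]
    exact geometric_mgf_at_tilt hp hmu hlam0
  calc P.real {ω | lam * mu ≤ (∑ i, (X i ω : ℝ)) / n}
      ≤ P.real {ω | Fintype.card (Fin n) * (lam * mu) ≤ ∑ i, (X i ω : ℝ)} :=
        measureReal_mono (setOf_le_sum_div_subset _ _)
    _ ≤ (exp (-t * (lam * mu)) * ((1 + mu * lam) / (1 + mu))) ^ Fintype.card (Fin n) :=
      measure_sum_ge_le_pow_of_iIndepFun (hindep.comp _ fun _ => measurable_from_top)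
        (fun i => measurable_from_top.comp (hmeas i)) (log_nonneg (one_le_tilt_ratio hmu0 hlam.le))
        (fun i => integrable_exp_mul_of_map_eq_geometricMeasure (hmeas i) (hlaw i) hq htilt_lt)
        hmgf _
    _ = exp (-n * geometricTailRate mu lam) := by
      rw [exp_neg_log_tilt_mul hmu0 hlam0, Fintype.card_fin, ← exp_nat_mul, neg_mul, mul_neg]
end

section
/- For every μ > 0 and every λ ∈ (0,1], the inequality H(λ,μ) ≥ (μ/(2(1+μ)))·(λ−1)² holds, where H(λ,μ) = μλ·ln λ − (1+μλ)·ln((1+μλ)/(1+μ)) and H(0,μ) is interpreted as the limit of H(λ,μ) as λ → 0⁺. -/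
open Real

/-!
Both sides of the inequality vanish at `λ = 1`, and so do their `λ`-derivatives. The second
derivative `μ / (λ (1 + μλ))` of `H` is at least `μ / (1 + μ)` on `(0, 1]`, which is the second
derivative of the right-hand side, so integrating twice from `1` down to `λ` gives the claim.
-/

noncomputable def H (μ x : ℝ) : ℝ :=
  μ * x * log x - (1 + μ * x) * log ((1 + μ * x) / (1 + μ))

noncomputable def H' (μ x : ℝ) : ℝ :=
  μ * (log x - log ((1 + μ * x) / (1 + μ)))

@[simp]
lemma H_one (μ : ℝ) : H μ 1 = 0 := by
  simp [H]

@[simp]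
lemma H'_one {μ : ℝ} (hμ : 1 + μ ≠ 0) : H' μ 1 = 0 := by
  simp [H', hμ]

lemma le_of_hasDerivAt_nonneg_on_Icc {f f' : ℝ → ℝ} {a b : ℝ} (hab : a ≤ b)
    (hf : ∀ x ∈ Set.Icc a b, HasDerivAt f (f' x) x) (hf' : ∀ x ∈ Set.Ioo a b, 0 ≤ f' x) :
    f a ≤ f b := by
  have hmono : MonotoneOn f (Set.Icc a b) := by
    refine monotoneOn_of_hasDerivWithinAt_nonneg (f' := f') (convex_Icc a b)
      (fun x hx => (hf x hx).continuousAt.continuousWithinAt) (fun x hx => ?_) ?_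
    · rw [interior_Icc] at hx ⊢
      exact (hf x (Set.Ioo_subset_Icc_self hx)).hasDerivWithinAt
    · simpa only [interior_Icc] using hf'
  exact hmono (Set.left_mem_Icc.2 hab) (Set.right_mem_Icc.2 hab) hab

section Derivatives

variable {μ x : ℝ}

lemma hasDerivAt_log_ratio (hμx : 1 + μ * x ≠ 0) (hμ : 1 + μ ≠ 0) :
    HasDerivAt (fun y => log ((1 + μ * y) / (1 + μ))) (μ / (1 + μ * x)) x := by
  have hlin : HasDerivAt (fun y => (1 + μ * y) / (1 + μ)) (μ / (1 + μ)) x := by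
    simpa using (((hasDerivAt_id x).const_mul μ).const_add 1).div_const (1 + μ)
  convert hlin.log (div_ne_zero hμx hμ) using 1
  rw [div_div_div_cancel_right₀ hμ]

lemma hasDerivAt_H (hx : x ≠ 0) (hμx : 1 + μ * x ≠ 0) (hμ : 1 + μ ≠ 0) :
    HasDerivAt (H μ) (H' μ x) x := by
  have hlin : HasDerivAt (fun y => 1 + μ * y) μ x := by
    simpa using ((hasDerivAt_id x).const_mul μ).const_add 1
  refine ((((hasDerivAt_id' x).const_mul μ).mul (hasDerivAt_log hx)).sub
    (hlin.mul (hasDerivAt_log_ratio hμx hμ))).congr_deriv ?_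
  field_simp
  rw [H']
  ring

lemma hasDerivAt_H' (hx : x ≠ 0) (hμx : 1 + μ * x ≠ 0) (hμ : 1 + μ ≠ 0) :
    HasDerivAt (H' μ) (μ / (x * (1 + μ * x))) x := by
  refine (((hasDerivAt_log hx).sub (hasDerivAt_log_ratio hμx hμ)).const_mul μ).congr_deriv ?_
  field_simp
  ring

end Derivatives

lemma H'_le {μ x : ℝ} (hμ : 0 < μ) (hx0 : 0 < x) (hx1 : x ≤ 1) :
    H' μ x ≤ μ / (1 + μ) * (x - 1) := by
  have key := le_of_hasDerivAt_nonneg_on_Icc hx1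
    (f := fun y => H' μ y - μ / (1 + μ) * (y - 1))
    (fun y hy => (hasDerivAt_H' (hx0.trans_le hy.1).ne' (by nlinarith [hy.1]) (by linarith)).sub
      (((hasDerivAt_id y).sub_const 1).const_mul _))
    (fun y hy => by
      obtain ⟨hxy, hy1⟩ := hy
      have hy0 : 0 < y := hx0.trans hxy
      have hden : y * (1 + μ * y) ≤ 1 + μ := by
        nlinarith [mul_pos hμ (mul_pos (sub_pos.2 hy1) (by linarith : 0 < 1 + y))]
      simp only [mul_one, sub_nonneg]
      exact div_le_div_of_nonneg_left hμ.le (by positivity) hden)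
  simp only [H'_one (by linarith : 1 + μ ≠ 0), sub_self, mul_zero] at key
  linarith

theorem H_approx_one (mu : ℝ) (hmu : 0 < mu) (lam : ℝ) (hlam : lam ∈ Set.Ioc (0 : ℝ) 1) :
    mu / (2 * (1 + mu)) * (lam - 1) ^ 2 ≤ (mu * lam * Real.log lam - (1 + mu * lam) * Real.log ((1 + mu * lam) / (1 + mu))) := by
  obtain ⟨hlam0, hlam1⟩ := hlam
  have key := le_of_hasDerivAt_nonneg_on_Icc hlam1
    (f := fun y => mu / (2 * (1 + mu)) * (y - 1) ^ 2 - H mu y)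
    (fun y hy => (((hasDerivAt_id y).sub_const 1).pow 2 |>.const_mul _).sub
      (hasDerivAt_H (hlam0.trans_le hy.1).ne' (by nlinarith [hy.1]) (by linarith)))
    (fun y hy => by
      have hH' := H'_le hmu (hlam0.trans hy.1) hy.2.le
      have hc : mu / (2 * (1 + mu)) * (2 * (y - 1)) = mu / (1 + mu) * (y - 1) := by
        field_simp
      simp only [id, Nat.cast_ofNat, sub_nonneg]
      linarith)
  simp only [sub_self, H_one] at key
  simpa [H] using key
end

section
/- Let p ∈ (0,1), μ = (1−p)/p, and let X₁,…,Xₙ be independent, identically distributed geometric random variables with Pr[X = k] = p(1−p)^k for k = 0,1,2,…; let X̄ₙ = (X₁+⋯+Xₙ)/n. Then for every λ > 1 and every integer n ≥ 1, Pr[X̄ₙ ≥ λμ] ≥ exp(−n·[H(λ,μ) + ln(2πn)/(2n) + Δ_U(λ,μ)/n]), where H(λ,μ) = μλ·ln λ − (1+μλ)·ln((1+μλ)/(1+μ)) and Δ_U(λ,μ) = 7/6 + ln(λ + 2/μ). -/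
/-!
Let `k = ⌈nμλ⌉`. For every tuple `a` with `∑ aᵢ = k`, the event "`Xᵢ = aᵢ` for `i ≠ 0` and
`X₀ ≥ a₀`" forces `∑ Xᵢ ≥ k` and has probability `p^(n-1) (1-p)^k`; these events are pairwise
disjoint and there are `C(n+k-1, k)` of them. By Stirling,
`log C(n+k, k) ≥ n log(1 + k/n) + k log(1 + n/k) - O(log n + log k)`, and the entropy
`b ↦ n log(1 + b/n) + b log(1 + n/b)` is increasing, so it may be evaluated at `b = nμλ`, where
adding `n log p + b log(1-p)` gives exactly `-n H(λ, μ)`. The factor `n/(n+k)` between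
`C(n+k-1, k)` and `C(n+k, k)`, the rounding `k - nμλ ≤ 1` and the Stirling constants are what
`Δ_U` pays for.
-/

open MeasureTheory ProbabilityTheory Real Finset
open scoped ENNReal Nat

theorem Nat.add_sub_one_choose_mul {n : ℕ} (hn : n ≠ 0) (k : ℕ) :
    (n + k - 1).choose k * (n + k) = (n + k).choose k * n := by
  obtain ⟨m, rfl⟩ : ∃ m, n = m + 1 := ⟨n - 1, by omega⟩
  have h := choose_mul_succ_eq (m + k) k
  rwa [show m + k + 1 - k = m + 1 by omega, ← show m + 1 + k - 1 = m + k by omega,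
    show m + 1 + k - 1 + 1 = m + 1 + k by omega] at h

theorem Finset.Nat.card_antidiagonalTuple (n k : ℕ) :
    #(antidiagonalTuple n k) = (n + k - 1).choose k := by
  have e : antidiagonalTuple n k ≃ Sym (Fin n) k :=
    (Equiv.subtypeEquivRight fun _ => mem_antidiagonalTuple).trans
      (Sym.equivNatSumOfFintype (Fin n) k).symm
  rw [← Fintype.card_coe, Fintype.card_congr e, Sym.card_sym_eq_choose, Fintype.card_fin]

theorem eq_of_sum_eq_of_forall_ne {ι M : Type*} [Fintype ι] [DecidableEq ι]
    [AddCommMonoid M] [IsCancelAdd M] {a b : ι → M} (j : ι) (hsum : ∑ i, a i = ∑ i, b i)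
    (hne : ∀ i ≠ j, a i = b i) : a = b := by
  have hrest : ∑ i ∈ univ.erase j, a i = ∑ i ∈ univ.erase j, b i :=
    sum_congr rfl fun i hi => hne i (ne_of_mem_erase hi)
  rw [← add_sum_erase _ _ (mem_univ j), ← add_sum_erase _ _ (mem_univ j), hrest] at hsum
  funext i
  by_cases hij : i = j
  · exact hij ▸ add_right_cancel hsum
  · exact hne i hij

theorem Stirling.log_factorial_le_stirling {n : ℕ} (hn : n ≠ 0) :
    log n ! ≤ n * log n - n + log n / 2 + 1 := by
  obtain ⟨m, rfl⟩ : ∃ m, n = m + 1 := ⟨n - 1, by omega⟩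
  have hseq : stirlingSeq (m + 1) ≤ exp 1 / √2 := by
    simpa using stirlingSeq'_antitone (Nat.zero_le m)
  have hlog := log_le_log (stirlingSeq'_pos m) hseq
  have hm : (0 : ℝ) < (m + 1 : ℕ) := by positivity
  rw [log_stirlingSeq_formula, log_div (exp_pos 1).ne' (by positivity), log_exp,
    log_sqrt zero_le_two, log_mul two_ne_zero hm.ne', log_div hm.ne' (exp_pos 1).ne',
    log_exp] at hlog
  linarith

theorem Stirling.le_log_add_choose {n k : ℕ} (hn : n ≠ 0) (hk : k ≠ 0) :
    n * log (1 + k / n) + k * log (1 + n / k) + (log (n + k) - log n - log k) / 2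
      + log (2 * π) / 2 - 2 ≤ log ((n + k).choose k) := by
  have hn0 : (0 : ℝ) < n := by positivity
  have hk0 : (0 : ℝ) < k := by positivity
  have hfact : ((n + k).choose k : ℝ) * n ! * k ! = (n + k)! := by
    exact_mod_cast Nat.add_choose_mul_factorial_mul_factorial n k
  have hlog : log ((n + k).choose k) = log (n + k)! - log n ! - log k ! := by
    have := Nat.factorial_pos n
    have := Nat.factorial_pos k
    have := Nat.choose_pos (Nat.le_add_left k n)
    rw [← hfact, log_mul (by positivity) (by positivity), log_mul (by positivity) (by positivity)]
    ring
  have hnk! := le_log_factorial_stirling (n := n + k) (by omega)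
  have hn! := log_factorial_le_stirling hn
  have hk! := log_factorial_le_stirling hk
  have hlog_n : log (1 + k / n) = log (n + k) - log n := by
    rw [← log_div (by positivity) hn0.ne']; congr 1; field_simp
  have hlog_k : log (1 + n / k) = log (n + k) - log k := by
    rw [← log_div (by positivity) hk0.ne']; congr 1; field_simp; ring
  push_cast at hnk!
  rw [hlog, hlog_n, hlog_k]
  linarith

theorem Stirling.le_log_add_sub_one_choose {n k : ℕ} (hn : n ≠ 0) (hk : k ≠ 0) :
    n * log (1 + k / n) + k * log (1 + n / k) - log (1 + k / n) - log (2 * π * n) / 2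
      + log (2 * π) - 2 ≤ log ((n + k - 1).choose k) := by
  have hn0 : (0 : ℝ) < n := by positivity
  have hk0 : (0 : ℝ) < k := by positivity
  have hmul : ((n + k - 1).choose k : ℝ) * (n + k) = (n + k).choose k * n := by
    exact_mod_cast Nat.add_sub_one_choose_mul hn k
  have hlog : log ((n + k - 1).choose k) + log (n + k) = log ((n + k).choose k) + log n := by
    have := Nat.choose_pos (show k ≤ n + k - 1 by omega)
    have := Nat.choose_pos (Nat.le_add_left k n)
    rw [← log_mul (by positivity) (by positivity), ← log_mul (by positivity) hn0.ne', hmul]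
  have hlog_n : log (1 + k / n) = log (n + k) - log n := by
    rw [← log_div (by positivity) hn0.ne']; congr 1; field_simp
  have hlog_k : log k ≤ log (n + k) := log_le_log hk0 (by linarith)
  have hlog_2πn : log (2 * π * n) = log (2 * π) + log n := log_mul (by positivity) hn0.ne'
  linarith [le_log_add_choose hn hk]

theorem monotoneOn_mul_log_one_add_div {s : ℝ} (hs : 0 ≤ s) :
    MonotoneOn (fun x => x * log (1 + s / x)) (Set.Ioi 0) := by
  intro c (hc : 0 < c) b (hb : 0 < b) hcb
  have hjensen := strictConcaveOn_log_Ioi.concaveOn.2 (x := 1 + s / c) (y := 1)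
    (by simp only [Set.mem_Ioi]; positivity) (by simp) (by positivity)
    (sub_nonneg.2 ((div_le_one hb).2 hcb)) (add_sub_cancel (c / b) 1)
  have hpt : (c / b) • (1 + s / c) + (1 - c / b) • (1 : ℝ) = 1 + s / b := by
    simp only [smul_eq_mul]; field_simp; ring
  rw [hpt, smul_eq_mul, smul_eq_mul, log_one, mul_zero, add_zero] at hjensen
  calc c * log (1 + s / c) = b * (c / b * log (1 + s / c)) := by field_simp
    _ ≤ b * log (1 + s / b) := mul_le_mul_of_nonneg_left hjensen hb.le

/-- `H(λ, μ)`, the Cramér rate of the geometric law of mean `μ` at the point `λμ`. -/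
noncomputable def geometricRate (lam mu : ℝ) : ℝ :=
  mu * lam * log lam - (1 + mu * lam) * log ((1 + mu * lam) / (1 + mu))

theorem neg_geometricRate_eq {p mu lam : ℝ} (hp0 : 0 < p) (hp1 : p < 1) (hmu : mu = (1 - p) / p)
    (hlam : 0 < lam) :
    -geometricRate lam mu
      = log (1 + mu * lam) + mu * lam * log (1 + 1 / (mu * lam)) + mu * lam * log (1 - p)
        + log p := by
  have hmu0 : 0 < mu := hmu ▸ div_pos (by linarith) hp0
  have hp : p = 1 / (1 + mu) := by rw [hmu]; field_simp; ring
  have hq : 1 - p = mu / (1 + mu) := by rw [hp]; field_simp; ring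
  have hlog : log (1 + 1 / (mu * lam)) = log (1 + mu * lam) - log mu - log lam := by
    rw [show 1 + 1 / (mu * lam) = (1 + mu * lam) / mu / lam by field_simp; ring,
      log_div (by positivity) hlam.ne', log_div (by positivity) hmu0.ne']
  rw [geometricRate, hlog, hq, hp, log_div (by positivity) (by positivity),
    log_div hmu0.ne' (by positivity), one_div, log_inv]
  ring

theorem exp_neg_mul_geometricRate_le {p mu lam : ℝ} (hp0 : 0 < p) (hp1 : p < 1)
    (hmu : mu = (1 - p) / p) (hlam : 0 < lam) {n k : ℕ} (hn : n ≠ 0)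
    (hk_ge : n * (mu * lam) ≤ k) (hk_le : k ≤ n * (mu * lam) + 1) :
    exp (-(n * geometricRate lam mu) - log (2 * π * n) / 2 - (7 / 6 + log (lam + 2 / mu))) ≤
      (n + k - 1).choose k * p ^ (n - 1) * (1 - p) ^ k := by
  have hmu0 : 0 < mu := hmu ▸ div_pos (by linarith) hp0
  have hq0 : 0 < 1 - p := by linarith
  have hn0 : (0 : ℝ) < n := by positivity
  set c := n * (mu * lam) with hc
  have hc0 : 0 < c := by positivity
  have hk0 : (0 : ℝ) < k := hc0.trans_le hk_ge
  have hk : k ≠ 0 := by rintro rfl; simp at hk0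
  have hchoose := Nat.choose_pos (show k ≤ n + k - 1 by omega)
  rw [← le_log_iff_exp_le (by positivity), log_mul (by positivity) (pow_pos hq0 k).ne',
    log_mul (Nat.cast_pos.2 hchoose).ne' (pow_pos hp0 _).ne', log_pow, log_pow,
    Nat.cast_sub (by omega)]
  have hstirling := Stirling.le_log_add_sub_one_choose hn hk
  have hmono₁ : n * log (1 + c / n) ≤ n * log (1 + k / n) :=
    mul_le_mul_of_nonneg_left (log_le_log (by positivity) (by gcongr)) hn0.le
  have hmono₂ : c * log (1 + n / c) ≤ k * log (1 + n / k) :=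
    monotoneOn_mul_log_one_add_div hn0.le hc0 hk0 hk_ge
  have hrate : n * log (1 + c / n) + c * log (1 + n / c) + c * log (1 - p) + n * log p
      = -(n * geometricRate lam mu) := by
    rw [neg_mul_eq_mul_neg, neg_geometricRate_eq hp0 hp1 hmu hlam, hc,
      show n * (mu * lam) / n = mu * lam by field_simp,
      show (n : ℝ) / (n * (mu * lam)) = 1 / (mu * lam) by field_simp]
    ring
  have hround : (c + 1) * log (1 - p) ≤ k * log (1 - p) :=
    mul_le_mul_of_nonpos_right hk_le (log_nonpos hq0.le (by linarith))
  have hmean : log (1 + k / n) ≤ log (1 - p) - log p + log (lam + 2 / mu) := by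
    have hkn : (k : ℝ) / n ≤ mu * lam + 1 := by
      have hn1 : (1 : ℝ) ≤ n := by exact_mod_cast Nat.one_le_iff_ne_zero.2 hn
      rw [div_le_iff₀ hn0]; linarith
    rw [← log_div hq0.ne' hp0.ne', ← hmu, ← log_mul hmu0.ne' (by positivity)]
    refine log_le_log (by positivity) ?_
    rw [mul_add, mul_div_cancel₀ _ hmu0.ne']
    linarith
  have h2π : 5 / 6 ≤ log (2 * π) := by
    rw [le_log_iff_exp_le (by positivity)]
    calc exp (5 / 6) ≤ exp 1 := exp_le_exp.2 (by norm_num)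
      _ ≤ 2 * π := by linarith [exp_one_lt_d9, pi_gt_three]
  push_cast
  linarith

section Geometric

variable {Ω : Type*} {n : ℕ}

def tailCylinder (X : Fin n → Ω → ℕ) (j : Fin n) (a : Fin n → ℕ) : Set Ω :=
  ⋂ i, X i ⁻¹' (if i = j then Set.Ici (a i) else {a i})

theorem sum_le_sum_of_mem_tailCylinder {X : Fin n → Ω → ℕ} {j : Fin n} {a : Fin n → ℕ}
    {ω : Ω} (hω : ω ∈ tailCylinder X j a) : ∑ i, a i ≤ ∑ i, X i ω := by
  refine sum_le_sum fun i _ => ?_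
  have hi := Set.mem_iInter.1 hω i
  split_ifs at hi with hij
  · exact hi
  · exact (Set.mem_singleton_iff.1 hi).ge

theorem pairwiseDisjoint_tailCylinder (X : Fin n → Ω → ℕ) (j : Fin n) (k : ℕ) :
    (Nat.antidiagonalTuple n k : Set (Fin n → ℕ)).PairwiseDisjoint (tailCylinder X j) := by
  intro a ha b hb hab
  refine Set.disjoint_left.2 fun ω hωa hωb =>
    hab (eq_of_sum_eq_of_forall_ne j ?_ fun i hij => ?_)
  · rw [Nat.mem_antidiagonalTuple.1 ha, Nat.mem_antidiagonalTuple.1 hb]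
  · have hai := Set.mem_iInter.1 hωa i
    have hbi := Set.mem_iInter.1 hωb i
    rw [if_neg hij] at hai hbi
    exact (Set.mem_singleton_iff.1 hai).symm.trans hbi

variable [MeasurableSpace Ω] {P : Measure Ω} {p : ℝ}

theorem measure_le_eq_ofReal_pow_of_geometric (hp0 : 0 < p) (hp1 : p ≤ 1) {Y : Ω → ℕ}
    (hY : Measurable Y) (hdist : ∀ k, P {ω | Y ω = k} = ENNReal.ofReal (p * (1 - p) ^ k))
    (j : ℕ) : P {ω | j ≤ Y ω} = ENNReal.ofReal ((1 - p) ^ j) := by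
  have hsum : HasSum (fun t : ℕ => p * (1 - p) ^ (j + t)) ((1 - p) ^ j) := by
    have h := (hasSum_geometric_of_lt_one (by linarith) (by linarith : 1 - p < 1)).mul_left
      (p * (1 - p) ^ j)
    rw [sub_sub_cancel, mul_right_comm, mul_inv_cancel₀ hp0.ne', one_mul] at h
    simpa only [pow_add, mul_assoc] using h
  have hsets : {ω | j ≤ Y ω} = ⋃ t : ℕ, {ω | Y ω = j + t} := by
    ext ω
    simp only [Set.mem_ofPred_eq, Set.mem_iUnion]
    exact ⟨fun h => ⟨Y ω - j, by omega⟩, fun ⟨t, ht⟩ => by omega⟩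
  have hdisj : Pairwise (Function.onFun Disjoint fun t : ℕ => {ω | Y ω = j + t}) :=
    fun s t hst => Set.disjoint_left.2 fun ω hs ht => hst (by
      simp only [Set.mem_ofPred_eq] at hs ht; omega)
  rw [hsets, measure_iUnion hdisj fun t => hY (measurableSet_singleton (j + t))]
  simp_rw [hdist]
  rw [← ENNReal.ofReal_tsum_of_nonneg (fun t => by positivity) hsum.summable, hsum.tsum_eq]

theorem measurableSet_tailCylinder {X : Fin n → Ω → ℕ} (hX : ∀ i, Measurable (X i))
    (j : Fin n) (a : Fin n → ℕ) : MeasurableSet (tailCylinder X j a) :=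
  MeasurableSet.iInter fun i => hX i .of_discrete

theorem measure_tailCylinder (hp0 : 0 < p) (hp1 : p ≤ 1) {X : Fin n → Ω → ℕ}
    (hX : ∀ i, Measurable (X i)) (hindep : iIndepFun X P)
    (hdist : ∀ i k, P {ω | X i ω = k} = ENNReal.ofReal (p * (1 - p) ^ k))
    (j : Fin n) (a : Fin n → ℕ) :
    P (tailCylinder X j a) = ENNReal.ofReal (p ^ (n - 1) * (1 - p) ^ ∑ i, a i) := by
  have hfactor : ∀ i, P (X i ⁻¹' (if i = j then Set.Ici (a i) else {a i}))
      = ENNReal.ofReal ((if i = j then 1 else p) * (1 - p) ^ a i) := by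
    intro i
    split_ifs
    · rw [one_mul]
      exact measure_le_eq_ofReal_pow_of_geometric hp0 hp1 (hX i) (hdist i) (a i)
    · exact hdist i (a i)
  rw [tailCylinder, hindep.meas_iInter fun i => ⟨_, .of_discrete, rfl⟩,
    prod_congr rfl fun i _ => hfactor i,
    ← ENNReal.ofReal_prod_of_nonneg fun i _ => by positivity, prod_mul_distrib,
    prod_pow_eq_pow_sum, prod_ite, filter_ne', prod_const_one, one_mul,
    prod_const, card_erase_of_mem (mem_univ j), card_univ, Fintype.card_fin]

theorem ofReal_choose_mul_le_measure_sum_ge (hp0 : 0 < p) (hp1 : p ≤ 1) {X : Fin n → Ω → ℕ}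
    (hX : ∀ i, Measurable (X i)) (hindep : iIndepFun X P)
    (hdist : ∀ i k, P {ω | X i ω = k} = ENNReal.ofReal (p * (1 - p) ^ k)) (hn : n ≠ 0)
    (k : ℕ) : ENNReal.ofReal ((n + k - 1).choose k * p ^ (n - 1) * (1 - p) ^ k) ≤
      P {ω | k ≤ ∑ i, X i ω} := by
  let j : Fin n := ⟨0, Nat.pos_of_ne_zero hn⟩
  calc ENNReal.ofReal ((n + k - 1).choose k * p ^ (n - 1) * (1 - p) ^ k)
      = ∑ a ∈ Nat.antidiagonalTuple n k, P (tailCylinder X j a) := by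
        rw [sum_congr rfl fun a ha => by
            rw [measure_tailCylinder hp0 hp1 hX hindep hdist, Nat.mem_antidiagonalTuple.1 ha],
          sum_const, Nat.card_antidiagonalTuple, nsmul_eq_mul, ← ENNReal.ofReal_natCast,
          ← ENNReal.ofReal_mul (by positivity), mul_assoc]
    _ = P (⋃ a ∈ Nat.antidiagonalTuple n k, tailCylinder X j a) :=
        (measure_biUnion_finset (pairwiseDisjoint_tailCylinder X j k)
          fun a _ => measurableSet_tailCylinder hX j a).symm
    _ ≤ P {ω | k ≤ ∑ i, X i ω} := measure_mono <| Set.iUnion₂_subset fun a ha ω hω =>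
        (Nat.mem_antidiagonalTuple.1 ha) ▸ sum_le_sum_of_mem_tailCylinder hω

end Geometric

theorem geometric_upper_tail_lower_bound
    {Omega : Type*} [MeasurableSpace Omega] (P : Measure Omega) [IsProbabilityMeasure P]
    (p : ℝ) (hp : p ∈ Set.Ioo (0 : ℝ) 1) (n : ℕ)
    (X : Fin n → Omega → ℕ)
    (hmeas : ∀ i, Measurable (X i))
    (hindep : iIndepFun X P)
    (hdist : ∀ i k, P {omega | X i omega = k} = ENNReal.ofReal (p * (1 - p) ^ k))
    (mu : ℝ) (hmu : mu = (1 - p) / p)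
    (lam : ℝ) (hlam : 1 < lam) (hn : 1 ≤ n) :
    Real.exp (-(n : ℝ) * ((mu * lam * Real.log lam - (1 + mu * lam) * Real.log ((1 + mu * lam) / (1 + mu))) + Real.log (2 * Real.pi * n) / (2 * n)
        + (7 / 6 + Real.log (lam + 2 / mu)) / n)) ≤
      (P {omega | lam * mu ≤ (∑ i, (X i omega : ℝ)) / n}).toReal := by
  obtain ⟨hp0, hp1⟩ := hp
  have hn0 : n ≠ 0 := Nat.one_le_iff_ne_zero.1 hn
  have hnR : (0 : ℝ) < n := by positivity
  have hlam0 : 0 < lam := by linarith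
  have hmu0 : 0 < mu := hmu ▸ div_pos (by linarith) hp0
  set k := ⌈n * (mu * lam)⌉₊
  have hk_ge : n * (mu * lam) ≤ k := Nat.le_ceil _
  have hk_le : (k : ℝ) ≤ n * (mu * lam) + 1 := (Nat.ceil_lt_add_one (by positivity)).le
  have hevent : {ω | k ≤ ∑ i, X i ω} ⊆ {ω | lam * mu ≤ (∑ i, (X i ω : ℝ)) / n} := by
    intro ω (hω : k ≤ ∑ i, X i ω)
    rw [Set.mem_ofPred_eq, le_div_iff₀ hnR]
    have : (k : ℝ) ≤ ∑ i, (X i ω : ℝ) := by exact_mod_cast hω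
    linarith
  calc _ = exp (-(n * geometricRate lam mu) - log (2 * π * n) / 2
          - (7 / 6 + log (lam + 2 / mu))) := by
        rw [geometricRate]; congr 1; field_simp; ring
    _ ≤ (n + k - 1).choose k * p ^ (n - 1) * (1 - p) ^ k :=
        exp_neg_mul_geometricRate_le hp0 hp1 hmu hlam0 hn0 hk_ge hk_le
    _ ≤ (P {ω | k ≤ ∑ i, X i ω}).toReal :=
        (ENNReal.ofReal_le_iff_le_toReal (measure_ne_top _ _)).1
          (ofReal_choose_mul_le_measure_sum_ge hp0 hp1.le hmeas hindep hdist hn0 k)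
    _ ≤ _ := ENNReal.toReal_mono (measure_ne_top _ _) (measure_mono hevent)
end

section
/- Let p ∈ (0,1), μ = (1−p)/p, and let X₁,…,Xₙ be independent, identically distributed geometric random variables with Pr[X = k] = p(1−p)^k for k = 0,1,2,…; let X̄ₙ = (X₁+⋯+Xₙ)/n. Then for every λ ∈ (0,1) and every integer n ≥ 1/(λμ), Pr[X̄ₙ ≤ λμ] ≥ exp(−n·[H(λ,μ) + ln(2πn)/(2n) + Δ_L(λ,μ)/n]), where H(λ,μ) = μλ·ln λ − (1+μλ)·ln((1+μλ)/(1+μ)) and Δ_L(λ,μ) = 1/6 + (3/2)·ln(1 + 1/(λμ)). -/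
open MeasureTheory ProbabilityTheory Real Filter
open scoped Topology Nat

/-!
The sum `S` of the `Xᵢ` is negative binomial, `P(S = k) = multichoose n k · pⁿ (1-p)ᵏ`, so for
`m = ⌊nλμ⌋` the event `S ≤ m ⊆ {X̄ₙ ≤ λμ}` has probability at least `C(n+m, m) pⁿ (1-p)ᵐ`.
Robbins' two-sided Stirling bounds give `log C(n+m, m) ≥ F(m) + ½ log(1 + n/m) - ½ log(2πn) - 1/6`
with `F(u) = (n+u) log(n+u) - u log u - n log n`. Since `F` is concave with slope `log(1 + n/m)`
at `m`, moving from `m` to `x = nλμ ∈ [m, m+1]` costs at most `log(1 + n/m) ≤ 3 log(1 + n/x)`,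
and `-n H(λ,μ) = F(x) + n log p + x log(1-p)` is exactly the resulting exponent.
-/

open Finset in
theorem Finset.Nat.card_antidiagonalTuple_s10 (n k : ℕ) :
    #(Finset.Nat.antidiagonalTuple n k) = n.multichoose k := by
  rw [← Sym.card_sym_fin_eq_multichoose]
  exact card_eq_of_equiv_fintype <| (Equiv.subtypeEquivRight fun _ => mem_antidiagonalTuple).trans
    (Sym.equivNatSumOfFintype (Fin n) k).symm

section NegativeBinomial

open Finset

variable {Ω : Type*} [MeasurableSpace Ω] {P : Measure Ω} {n : ℕ} {X : Fin n → Ω → ℕ} {p : ℝ}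

theorem measure_sum_eq_of_iIndepFun_geometric (hmeas : ∀ i, Measurable (X i))
    (hindep : iIndepFun X P)
    (hdist : ∀ i k, P {ω | X i ω = k} = ENNReal.ofReal (p * (1 - p) ^ k))
    (hp0 : 0 ≤ p) (hp1 : p ≤ 1) (k : ℕ) :
    P {ω | ∑ i, X i ω = k} = n.multichoose k * ENNReal.ofReal (p ^ n * (1 - p) ^ k) := by
  set V : Ω → Fin n → ℕ := fun ω i => X i ω
  have hV : Measurable V := measurable_pi_lambda V hmeas
  have hset : {ω | ∑ i, X i ω = k} = V ⁻¹' ↑(Nat.antidiagonalTuple n k) := by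
    ext; simp [V, Nat.mem_antidiagonalTuple]
  have hfiber (a : Fin n → ℕ) : V ⁻¹' {a} = ⋂ i, X i ⁻¹' {a i} := by
    ext; simp [V, funext_iff]
  rw [hset, ← sum_measure_preimage_singleton _ fun a _ => hV (measurableSet_singleton a),
    ← Nat.card_antidiagonalTuple_s10, ← nsmul_eq_mul, ← sum_const]
  refine sum_congr rfl fun a ha => ?_
  have hq : 0 ≤ 1 - p := by linarith
  rw [hfiber, hindep.meas_iInter fun i => ⟨{a i}, measurableSet_singleton _, rfl⟩]
  simp only [Set.preimage, Set.mem_singleton_iff, hdist]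
  rw [← ENNReal.ofReal_prod_of_nonneg fun i _ => by positivity, prod_mul_distrib, prod_const,
    prod_pow_eq_pow_sum, Nat.mem_antidiagonalTuple.1 ha, card_univ, Fintype.card_fin]

theorem ofReal_choose_mul_le_measure_sum_le (hmeas : ∀ i, Measurable (X i))
    (hindep : iIndepFun X P)
    (hdist : ∀ i k, P {ω | X i ω = k} = ENNReal.ofReal (p * (1 - p) ^ k))
    (hp0 : 0 ≤ p) (hp1 : p ≤ 1) (m : ℕ) :
    ENNReal.ofReal ((n + m).choose m * (p ^ n * (1 - p) ^ m)) ≤ P {ω | ∑ i, X i ω ≤ m} := by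
  set S : Ω → ℕ := fun ω => ∑ i, X i ω
  have hS : Measurable S := Finset.measurable_sum _ fun i _ => hmeas i
  have hset : {ω | ∑ i, X i ω ≤ m} = S ⁻¹' ↑(range (m + 1)) := by
    ext; simp [S]
  have hq : 0 ≤ 1 - p := by linarith
  rw [hset, ← sum_measure_preimage_singleton _ fun k _ => hS (measurableSet_singleton k)]
  calc ENNReal.ofReal ((n + m).choose m * (p ^ n * (1 - p) ^ m))
      = ∑ k ∈ range (m + 1), n.multichoose k * ENNReal.ofReal (p ^ n * (1 - p) ^ m) := by
        rw [← sum_mul, ← Nat.cast_sum, Nat.sum_range_multichoose, Nat.add_comm m n,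
          Nat.choose_symm_add, ENNReal.ofReal_mul (by positivity), ENNReal.ofReal_natCast]
    _ ≤ ∑ k ∈ range (m + 1), P (S ⁻¹' {k}) := by
        refine sum_le_sum fun k hk => ?_
        rw [show S ⁻¹' {k} = {ω | ∑ i, X i ω = k} from rfl,
          measure_sum_eq_of_iIndepFun_geometric hmeas hindep hdist hp0 hp1]
        gcongr _ * ENNReal.ofReal (_ * ?_)
        exact pow_le_pow_of_le_one hq (by linarith) (Nat.lt_succ_iff.1 (mem_range.1 hk))

end NegativeBinomial

namespace Stirling

theorem log_stirlingSeq_le {n : ℕ} (hn : n ≠ 0) :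
    log (stirlingSeq n) ≤ log √π + 1 / (12 * n) := by
  set v : ℕ → ℝ := fun k => log (stirlingSeq (k + n)) - 1 / (12 * (k + n : ℕ))
  have hv : Monotone v := monotone_nat_of_le_succ fun k => by
    have hk : (0 : ℝ) < (k + n : ℕ) := by positivity
    have := log_stirlingSeq_sdiff_le (k + n)
    simp only [v, add_right_comm k 1 n, Nat.cast_succ] at this ⊢
    field_simp at this ⊢
    linarith
  have hlim : Tendsto v atTop (𝓝 (log √π - 0)) := by
    refine ((continuousAt_log (by positivity)).tendsto.comp
      (tendsto_stirlingSeq_sqrt_pi.comp (tendsto_add_atTop_nat n))).sub ?_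
    refine ((tendsto_const_div_atTop_nhds_zero_nat (1 / 12 : ℝ)).comp
      (tendsto_add_atTop_nat n)).congr fun k => ?_
    simp only [Function.comp_apply]
    ring
  simpa [v] using hv.ge_of_tendsto hlim 0

theorem log_factorial_le_stirling_s10 {n : ℕ} (hn : n ≠ 0) :
    log n ! ≤ n * log n - n + log n / 2 + log (2 * π) / 2 + 1 / (12 * n) := by
  have h := log_stirlingSeq_le hn
  rw [log_stirlingSeq_formula, log_sqrt pi_pos.le, log_div (by positivity) (exp_ne_zero 1),
    log_exp, log_mul two_ne_zero (by positivity)] at h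
  rw [log_mul two_ne_zero pi_ne_zero]
  linarith

end Stirling

/-- The leading term of Stirling's approximation to `log (Nat.choose (a + u) u)`. -/
noncomputable def stirlingLogChoose (a u : ℝ) : ℝ := (a + u) * log (a + u) - u * log u - a * log a

theorem log_add_choose_eq (n m : ℕ) :
    log ((n + m).choose m) = log (n + m)! - log m ! - log n ! := by
  have h := congrArg (Nat.cast (R := ℝ)) (Nat.add_choose_mul_factorial_mul_factorial n m)
  push_cast at h
  have hc : ((n + m).choose m : ℝ) ≠ 0 := by exact_mod_cast (Nat.choose_pos (by omega)).ne'
  rw [← h, log_mul (by positivity) (by positivity), log_mul hc (by positivity)]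
  ring

theorem stirlingLogChoose_le_log_choose {n m : ℕ} (hn : n ≠ 0) (hm : m ≠ 0) :
    stirlingLogChoose n m + log (1 + n / m) / 2 - log (2 * π * n) / 2 - 1 / 6 ≤
      log ((n + m).choose m) := by
  have hn1 : (1 : ℝ) ≤ n := by exact_mod_cast Nat.one_le_iff_ne_zero.2 hn
  have hm1 : (1 : ℝ) ≤ m := by exact_mod_cast Nat.one_le_iff_ne_zero.2 hm
  have hnm := Stirling.le_log_factorial_stirling (n := n + m) (by omega)
  have hm' := Stirling.log_factorial_le_stirling_s10 hm
  have hn' := Stirling.log_factorial_le_stirling_s10 hn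
  have h12m : 1 / (12 * (m : ℝ)) ≤ 1 / 12 := by
    rw [div_le_div_iff₀ (by positivity) (by norm_num)]; linarith
  have h12n : 1 / (12 * (n : ℝ)) ≤ 1 / 12 := by
    rw [div_le_div_iff₀ (by positivity) (by norm_num)]; linarith
  have hratio : log (1 + n / m) = log (n + m) - log m := by
    rw [← log_div (by positivity) (by positivity), add_div, div_self (by positivity), add_comm]
  rw [log_add_choose_eq, stirlingLogChoose, hratio, log_mul (by positivity) (by positivity)]
  push_cast at hnm
  linarith

theorem hasDerivAt_stirlingLogChoose {a u : ℝ} (hau : a + u ≠ 0) (hu : u ≠ 0) :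
    HasDerivAt (stirlingLogChoose a) (log (a + u) - log u) u := by
  have h := (((hasDerivAt_mul_log hau).comp u ((hasDerivAt_id u).const_add a)).sub
    (hasDerivAt_mul_log hu)).sub_const (a * log a)
  rw [show log (a + u) - log u = (log (a + u) + 1) * 1 - (log u + 1) by ring]
  exact h

theorem stirlingLogChoose_sub_le {a m x : ℝ} (ha : 0 < a) (hm : 0 < m) (hmx : m ≤ x) :
    stirlingLogChoose a x - stirlingLogChoose a m ≤ log (1 + a / m) * (x - m) := by
  have hderiv : ∀ u ∈ Set.Ici m, HasDerivAt (stirlingLogChoose a) (log (a + u) - log u) u :=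
    fun u hu => hasDerivAt_stirlingLogChoose (by simp at hu; linarith) (by simp at hu; linarith)
  refine (convex_Ici m).image_sub_le_mul_sub_of_deriv_le
    (fun u hu => (hderiv u hu).continuousAt.continuousWithinAt)
    (fun u hu => (hderiv u (interior_subset hu)).differentiableAt.differentiableWithinAt)
    (fun u hu => ?_) m Set.self_mem_Ici x hmx hmx
  rw [interior_Ici] at hu
  have hu0 : 0 < u := hm.trans hu
  rw [(hderiv u (Set.mem_Ici.2 hu.le)).deriv, ← log_div (by positivity) hu0.ne']
  gcongr
  rw [add_div, div_self hu0.ne', add_comm]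
  gcongr
  exact hu.le

theorem log_one_add_le_three_mul_log_one_add_half {b : ℝ} (hb : 0 ≤ b) :
    log (1 + b) ≤ 3 * log (1 + b / 2) := by
  calc log (1 + b) ≤ log ((1 + b / 2) ^ 3) := log_le_log (by positivity) ?_
    _ = 3 * log (1 + b / 2) := by rw [log_pow]; norm_num
  have := one_add_mul_le_pow (a := b / 2) (by linarith) 3
  push_cast at this
  linarith

theorem stirlingLogChoose_le_log_choose_of_le_of_le {n m : ℕ} (hn : n ≠ 0) (hm : m ≠ 0) {x : ℝ}
    (hmx : m ≤ x) (hxm : x ≤ m + 1) :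
    stirlingLogChoose n x - log (2 * π * n) / 2 - 1 / 6 - 3 / 2 * log (1 + n / x) ≤
      log ((n + m).choose m) := by
  have hn0 : (0 : ℝ) < n := by positivity
  have hm1 : (1 : ℝ) ≤ m := by exact_mod_cast Nat.one_le_iff_ne_zero.2 hm
  have hstep : stirlingLogChoose n x - stirlingLogChoose n m ≤ log (1 + n / m) :=
    (stirlingLogChoose_sub_le hn0 (by positivity) hmx).trans
      (mul_le_of_le_one_right (log_nonneg (by simp; positivity)) (by linarith))
  have hcube : log (1 + n / m) ≤ 3 * log (1 + n / x) := by
    have hhalf : (n : ℝ) / m / 2 ≤ n / x := by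
      rw [div_div]
      exact div_le_div_of_nonneg_left hn0.le (by linarith) (by linarith)
    calc log (1 + n / m) ≤ 3 * log (1 + n / m / 2) :=
          log_one_add_le_three_mul_log_one_add_half (by positivity)
      _ ≤ 3 * log (1 + n / x) := by gcongr
  linarith [stirlingLogChoose_le_log_choose hn hm]

theorem exp_le_choose_mul_pow {n m : ℕ} (hn : n ≠ 0) (hm : m ≠ 0) {x p : ℝ}
    (hmx : m ≤ x) (hxm : x ≤ m + 1) (hp : p ∈ Set.Ioo (0 : ℝ) 1) :
    exp (stirlingLogChoose n x + n * log p + x * log (1 - p)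
        - log (2 * π * n) / 2 - 1 / 6 - 3 / 2 * log (1 + n / x)) ≤
      (n + m).choose m * (p ^ n * (1 - p) ^ m) := by
  obtain ⟨hp0, hp1⟩ := hp
  have hchoose : (0 : ℝ) < (n + m).choose m := by exact_mod_cast Nat.choose_pos (by omega)
  have hq : 0 < 1 - p := by linarith
  rw [← exp_log (by positivity : (0 : ℝ) < (n + m).choose m * (p ^ n * (1 - p) ^ m)),
    log_mul hchoose.ne' (by positivity), log_mul (x := p ^ n) (by positivity) (by positivity),
    log_pow, log_pow]
  gcongr
  have hpow : x * log (1 - p) ≤ m * log (1 - p) :=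
    mul_le_mul_of_nonpos_right hmx (log_nonpos hq.le (by linarith))
  linarith [stirlingLogChoose_le_log_choose_of_le_of_le hn hm hmx hxm]

theorem neg_mul_rate_eq {p mu lam n x : ℝ} (hp : p ∈ Set.Ioo (0 : ℝ) 1) (hmu : mu = (1 - p) / p)
    (hlam : 0 < lam) (hn : 0 < n) (hx : x = n * (lam * mu)) :
    -n * ((mu * lam * log lam - (1 + mu * lam) * log ((1 + mu * lam) / (1 + mu)))
        + log (2 * π * n) / (2 * n) + (1 / 6 + 3 / 2 * log (1 + 1 / (lam * mu))) / n) =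
      stirlingLogChoose n x + n * log p + x * log (1 - p)
        - log (2 * π * n) / 2 - 1 / 6 - 3 / 2 * log (1 + n / x) := by
  obtain ⟨hp0, hp1⟩ := hp
  have hq0 : 0 < 1 - p := by linarith
  have hmu0 : 0 < mu := by rw [hmu]; positivity
  have hx0 : 0 < x := by rw [hx]; positivity
  have hlam_eq : lam = x / n * p / (1 - p) := by rw [hx, hmu]; field_simp
  have hratio : (1 + mu * lam) / (1 + mu) = (n + x) / n * p := by rw [hx, hmu]; field_simp; ring
  have hinv : 1 / (lam * mu) = n / x := by rw [hx]; field_simp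
  have hmulam : mu * lam = x / n := by rw [hx]; field_simp
  rw [hratio, hinv, hmulam, hlam_eq, log_mul (by positivity) hp0.ne',
    log_div (by positivity) hq0.ne', log_mul (by positivity) hp0.ne',
    log_div (by positivity) hn.ne', log_div (by positivity) hn.ne', stirlingLogChoose]
  field_simp
  ring

theorem geometric_lower_tail_lower_bound
    {Omega : Type*} [MeasurableSpace Omega] (P : Measure Omega) [IsProbabilityMeasure P]
    (p : ℝ) (hp : p ∈ Set.Ioo (0 : ℝ) 1) (n : ℕ)
    (X : Fin n → Omega → ℕ)
    (hmeas : ∀ i, Measurable (X i))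
    (hindep : iIndepFun X P)
    (hdist : ∀ i k, P {omega | X i omega = k} = ENNReal.ofReal (p * (1 - p) ^ k))
    (mu : ℝ) (hmu : mu = (1 - p) / p)
    (lam : ℝ) (hlam : lam ∈ Set.Ioo (0 : ℝ) 1) (hn : 1 / (lam * mu) ≤ (n : ℝ)) :
    Real.exp (-(n : ℝ) * ((mu * lam * Real.log lam - (1 + mu * lam) * Real.log ((1 + mu * lam) / (1 + mu))) + Real.log (2 * Real.pi * n) / (2 * n)
        + (1 / 6 + 3 / 2 * Real.log (1 + 1 / (lam * mu))) / n)) ≤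
      (P {omega | (∑ i, (X i omega : ℝ)) / n ≤ lam * mu}).toReal := by
  have hmu0 : 0 < mu := by rw [hmu]; exact div_pos (by linarith [hp.2]) hp.1
  set x : ℝ := n * (lam * mu) with hx
  have hx1 : 1 ≤ x := by rwa [div_le_iff₀ (mul_pos hlam.1 hmu0)] at hn
  have hn0 : n ≠ 0 := by rintro rfl; simp [x] at hx1; linarith
  set m := ⌊x⌋₊
  have hm0 : m ≠ 0 := (Nat.floor_pos.2 hx1).ne'
  have hmx : (m : ℝ) ≤ x := Nat.floor_le (by linarith)
  have hevent : {ω | ∑ i, X i ω ≤ m} ⊆ {ω | (∑ i, (X i ω : ℝ)) / n ≤ lam * mu} := fun ω hω => by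
    have hsum : ((∑ i, X i ω : ℕ) : ℝ) ≤ m := by exact_mod_cast hω
    rw [Set.mem_ofPred_eq, div_le_iff₀ (by positivity)]
    push_cast at hsum
    linarith
  have hprob := (ofReal_choose_mul_le_measure_sum_le hmeas hindep hdist hp.1.le hp.2.le m).trans
    (measure_mono hevent)
  rw [ENNReal.ofReal_le_iff_le_toReal (measure_ne_top _ _)] at hprob
  rw [neg_mul_rate_eq hp hmu hlam.1 (by positivity) hx]
  exact (exp_le_choose_mul_pow hn0 hm0 hmx (Nat.lt_floor_add_one x).le hp).trans hprob
end

section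
/- Let p ∈ (0,1), μ = (1−p)/p, and let X₁,X₂,… be an infinite sequence of independent, identically distributed geometric random variables with Pr[X = k] = p(1−p)^k for k = 0,1,2,…; let X̄ₙ = (X₁+⋯+Xₙ)/n. Then for every fixed λ ∈ (0,1), the limit as n → ∞ of (−ln Pr[X̄ₙ ≤ λμ]) / (n·H(λ,μ)) equals 1, where H(λ,μ) = μλ·ln λ − (1+μλ)·ln((1+μλ)/(1+μ)). -/
/-!
The sum `Sₙ` of `n` independent geometric variables is negative binomial:
`P(Sₙ = k) = C(n+k-1, k) pⁿ (1-p)ᵏ`. For `m = ⌊λμn⌋` these weights increase in `k ≤ m`, so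
`P(Sₙ ≤ m)` lies between the last weight and `m + 1` times it. Up to a polynomial factor,
`C(n+m-1, m)` is `(n+m)^(n+m) / (mᵐ nⁿ)` (the largest term of the binomial expansion of
`(m + n)^(n+m)` is at least the average `(n+m)^(n+m) / (n+m+1)`), which gives
`-log P(Sₙ ≤ m) = n H(m / (nμ), μ) + O(log n)`. Dividing by `n H(λ, μ) > 0` and using the
continuity of `H` gives the limit.
-/

open MeasureTheory ProbabilityTheory Real Filter Finset Topology

namespace Nat

theorem sum_range_choose_add_sub_one (n k : ℕ) :
    ∑ j ∈ range (k + 1), (n + j - 1).choose j = (n + k).choose k := by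
  induction k with
  | zero => simp
  | succ k ih =>
    rw [sum_range_succ, ih, show n + (k + 1) - 1 = n + k by omega, ← add_assoc,
      Nat.choose_succ_succ (n + k) k]

theorem choose_add_sub_one_mul (n m : ℕ) :
    (n + m - 1).choose m * (n + m) = (n + m).choose m * n := by
  rcases n with _ | n
  · rcases m with _ | m <;> simp
  · have h := Nat.choose_mul_succ_eq (n + m) m
    rw [show n + m + 1 - m = n + 1 by omega] at h
    rw [show n + 1 + m - 1 = n + m by omega, show n + 1 + m = n + m + 1 by omega, h]

theorem choose_mul_pow_mul_pow_le_add_pow (n m : ℕ) :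
    (n + m).choose m * m ^ m * n ^ n ≤ (n + m) ^ (n + m) :=
  calc (n + m).choose m * m ^ m * n ^ n = m ^ m * n ^ (n + m - m) * (n + m).choose m := by
        rw [Nat.add_sub_cancel]; ring
    _ ≤ ∑ j ∈ range (n + m + 1), m ^ j * n ^ (n + m - j) * (n + m).choose j :=
        single_le_sum (f := fun j => m ^ j * n ^ (n + m - j) * (n + m).choose j)
          (fun _ _ => Nat.zero_le _) (mem_range.2 (by omega))
    _ = (m + n) ^ (n + m) := by rw [add_pow]; simp only [Nat.cast_id]
    _ = (n + m) ^ (n + m) := by rw [add_comm m n]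

theorem choose_succ_mul_pow_mul (x y : ℕ) {N j : ℕ} (hj : j < N) :
    N.choose (j + 1) * x ^ (j + 1) * y ^ (N - (j + 1)) * ((j + 1) * y) =
      N.choose j * x ^ j * y ^ (N - j) * ((N - j) * x) := by
  have hchoose := Nat.choose_succ_right_eq N j
  have hpow : y ^ (N - j) = y ^ (N - (j + 1)) * y := by
    rw [← pow_succ]; congr 1; omega
  rw [hpow]
  calc N.choose (j + 1) * x ^ (j + 1) * y ^ (N - (j + 1)) * ((j + 1) * y)
      = N.choose (j + 1) * (j + 1) * (x ^ (j + 1) * y ^ (N - (j + 1)) * y) := by ring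
    _ = _ := by rw [hchoose]; ring

theorem add_pow_le_succ_mul_choose_mul_pow_mul_pow (n m : ℕ) (hn : 0 < n) :
    (n + m) ^ (n + m) ≤ (n + m + 1) * ((n + m).choose m * m ^ m * n ^ n) := by
  set N := n + m
  set t : ℕ → ℕ := fun j => N.choose j * m ^ j * n ^ (N - j) with ht
  have hup : MonotoneOn t (Set.Iic m) := by
    refine monotoneOn_of_le_succ Set.ordConnected_Iic fun j _ _ hj1 => ?_
    simp only [Order.succ_eq_add_one, Set.mem_Iic] at hj1 ⊢
    have key : (j + 1) * n ≤ (N - j) * m := by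
      rw [mul_comm (N - j)]; exact Nat.mul_le_mul hj1 (by omega)
    refine Nat.le_of_mul_le_mul_right ?_ (by positivity : 0 < (j + 1) * n)
    calc t j * ((j + 1) * n) ≤ t j * ((N - j) * m) := Nat.mul_le_mul_left _ key
      _ = t (j + 1) * ((j + 1) * n) := (choose_succ_mul_pow_mul m n (by omega)).symm
  have hdown : AntitoneOn t (Set.Ici m) := by
    refine antitoneOn_of_succ_le Set.ordConnected_Ici fun j _ hj _ => ?_
    simp only [Order.succ_eq_add_one, Set.mem_Ici] at hj ⊢
    rcases lt_or_ge j N with hjN | hjN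
    · have key : (N - j) * m ≤ (j + 1) * n := by
        rw [mul_comm (j + 1)]; exact Nat.mul_le_mul (by omega) (by omega)
      refine Nat.le_of_mul_le_mul_right ?_ (by positivity : 0 < (j + 1) * n)
      calc t (j + 1) * ((j + 1) * n) = t j * ((N - j) * m) := choose_succ_mul_pow_mul m n hjN
        _ ≤ t j * ((j + 1) * n) := Nat.mul_le_mul_left _ key
    · simp [ht, Nat.choose_eq_zero_of_lt (by omega : N < j + 1)]
  have hmax : ∀ j, t j ≤ t m := fun j => by
    rcases le_total j m with hj | hj
    · exact hup hj (Set.mem_Iic.2 le_rfl) hj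
    · exact hdown (Set.mem_Ici.2 le_rfl) hj hj
  calc N ^ N = (m + n) ^ N := by rw [add_comm m n]
    _ = ∑ j ∈ range (N + 1), t j := by
        rw [add_pow]; exact sum_congr rfl fun j _ => by simp only [Nat.cast_id, t]; ring
    _ ≤ ∑ _j ∈ range (N + 1), t m := sum_le_sum fun j _ => hmax j
    _ = (N + 1) * ((n + m).choose m * m ^ m * n ^ n) := by
        simp [t, N]

theorem choose_add_sub_one_mul_pow_mul_pow_le_add_pow (n m : ℕ) :
    (n + m - 1).choose m * m ^ m * n ^ n ≤ (n + m) ^ (n + m) :=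
  le_trans (Nat.mul_le_mul_right _ <| Nat.mul_le_mul_right _ <|
    Nat.choose_le_choose m (Nat.sub_le _ _)) (choose_mul_pow_mul_pow_le_add_pow n m)

theorem add_pow_le_sq_mul_choose_add_sub_one_mul_pow_mul_pow (n m : ℕ) (hn : 0 < n) :
    (n + m) ^ (n + m) ≤ (n + m + 1) ^ 2 * ((n + m - 1).choose m * m ^ m * n ^ n) := by
  have hchoose : (n + m).choose m ≤ (n + m + 1) * (n + m - 1).choose m :=
    calc (n + m).choose m ≤ (n + m).choose m * n := Nat.le_mul_of_pos_right _ hn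
      _ = (n + m) * (n + m - 1).choose m := by rw [← choose_add_sub_one_mul, mul_comm]
      _ ≤ (n + m + 1) * (n + m - 1).choose m := Nat.mul_le_mul_right _ (Nat.le_succ _)
  calc (n + m) ^ (n + m) ≤ (n + m + 1) * ((n + m).choose m * m ^ m * n ^ n) :=
        add_pow_le_succ_mul_choose_mul_pow_mul_pow n m hn
    _ ≤ (n + m + 1) * ((n + m + 1) * (n + m - 1).choose m * m ^ m * n ^ n) := by gcongr
    _ = (n + m + 1) ^ 2 * ((n + m - 1).choose m * m ^ m * n ^ n) := by ring

end Nat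

noncomputable def geomLowerTailRate (lam mu : ℝ) : ℝ :=
  mu * lam * log lam - (1 + mu * lam) * log ((1 + mu * lam) / (1 + mu))

lemma geomLowerTailRate_pos {lam mu : ℝ} (hmu : 0 < mu) (hlam0 : 0 < lam) (hlam1 : lam ≠ 1) :
    0 < geomLowerTailRate lam mu := by
  set s := (1 + mu * lam) / (1 + mu) with hs
  have hs_mul : s * (1 + mu) = 1 + mu * lam := div_mul_cancel₀ _ (by positivity)
  have hs1 : s ≠ 1 := fun h => hlam1 <| by
    rw [h, one_mul] at hs_mul
    exact (mul_eq_left₀ hmu.ne').1 (by linarith)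
  -- Gibbs' inequality: the rate is `(1 + μλ)` times a relative entropy.
  have hlog_s : log s < s - 1 := log_lt_sub_one_of_pos (by positivity) hs1
  have hlog_s_div : log (s / lam) ≤ s / lam - 1 := log_le_sub_one_of_pos (by positivity)
  have hrate : geomLowerTailRate lam mu = mu * lam * -log (s / lam) - log s := by
    rw [geomLowerTailRate, ← hs, log_div (by positivity) hlam0.ne']
    ring
  have hlam_div : mu * lam * (s / lam) = mu * s := by field_simp
  rw [hrate]
  linarith [mul_le_mul_of_nonneg_left hlog_s_div (by positivity : 0 ≤ mu * lam)]

lemma continuousAt_geomLowerTailRate {lam : ℝ} (mu : ℝ) (hlam : 0 < lam) (hmu : 0 < mu) :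
    ContinuousAt (geomLowerTailRate · mu) lam := by
  unfold geomLowerTailRate
  fun_prop (disch := positivity)

/-- The truncated subtraction in `n + k - 1` gives the correct value `if k = 0 then 1 else 0`
at `n = 0`. -/
noncomputable def negBinomialWeight (p : ℝ) (n k : ℕ) : ℝ :=
  (n + k - 1).choose k * p ^ n * (1 - p) ^ k

section negBinomialWeight

variable {p : ℝ}

lemma negBinomialWeight_nonneg (hp0 : 0 ≤ p) (hp1 : p ≤ 1) (n k : ℕ) :
    0 ≤ negBinomialWeight p n k := by
  have : 0 ≤ 1 - p := by linarith
  unfold negBinomialWeight; positivity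

lemma negBinomialWeight_pos (hp0 : 0 < p) (hp1 : p < 1) {n : ℕ} (hn : 0 < n) (k : ℕ) :
    0 < negBinomialWeight p n k := by
  have : 0 < 1 - p := by linarith
  have : 0 < (n + k - 1).choose k := Nat.choose_pos (by omega)
  unfold negBinomialWeight; positivity

lemma sum_negBinomialWeight_mul_geometric (p : ℝ) (n k : ℕ) :
    ∑ j ∈ range (k + 1), negBinomialWeight p n (k - j) * (p * (1 - p) ^ j) =
      negBinomialWeight p (n + 1) k := by
  have hterm : ∀ j ∈ range (k + 1), negBinomialWeight p n (k - j) * (p * (1 - p) ^ j) =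
      (n + (k - j) - 1).choose (k - j) * (p ^ (n + 1) * (1 - p) ^ k) := fun j hj => by
    rw [negBinomialWeight, ← Nat.sub_add_cancel (mem_range_succ_iff.1 hj), pow_add,
      Nat.add_sub_cancel]
    ring
  have hchoose : ∑ j ∈ range (k + 1), ((n + (k - j) - 1).choose (k - j) : ℝ) =
      (n + k).choose k := by
    rw [← Nat.sum_range_choose_add_sub_one, Nat.cast_sum, ← sum_range_reflect]
    exact sum_congr rfl fun j hj => by
      rw [Nat.add_sub_cancel, Nat.sub_sub_self (mem_range_succ_iff.1 hj)]
  rw [sum_congr rfl hterm, ← sum_mul, hchoose, negBinomialWeight, Nat.add_right_comm,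
    Nat.add_sub_cancel]
  ring

lemma negBinomialWeight_succ_mul (p : ℝ) (n k : ℕ) :
    negBinomialWeight p n (k + 1) * (k + 1) = negBinomialWeight p n k * ((n + k) * (1 - p)) := by
  have hchoose : (n + (k + 1) - 1).choose (k + 1) * (k + 1) = (n + k - 1).choose k * (n + k) := by
    rw [Nat.choose_add_sub_one_mul, show n + (k + 1) - 1 = n + k by omega,
      Nat.choose_succ_right_eq, Nat.add_sub_cancel]
  have hchooseR : ((n + (k + 1) - 1).choose (k + 1) : ℝ) * (k + 1) =
      (n + k - 1).choose k * (n + k) := by exact_mod_cast hchoose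
  unfold negBinomialWeight
  linear_combination (p ^ n * (1 - p) ^ (k + 1)) * hchooseR

lemma negBinomialWeight_le_succ (hp0 : 0 ≤ p) (hp1 : p ≤ 1) {n k : ℕ}
    (hk : ((k : ℝ) + 1) * p ≤ (n - 1) * (1 - p)) :
    negBinomialWeight p n k ≤ negBinomialWeight p n (k + 1) := by
  have hfactor : (k : ℝ) + 1 ≤ (n + k) * (1 - p) := by linarith
  refine le_of_mul_le_mul_right ?_ (by positivity : (0 : ℝ) < k + 1)
  rw [negBinomialWeight_succ_mul]
  exact mul_le_mul_of_nonneg_left hfactor (negBinomialWeight_nonneg hp0 hp1 n k)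

lemma sum_range_negBinomialWeight_le (hp0 : 0 ≤ p) (hp1 : p ≤ 1) {n m : ℕ}
    (hm : (m : ℝ) * p ≤ (n - 1) * (1 - p)) :
    ∑ k ∈ range (m + 1), negBinomialWeight p n k ≤ (m + 1) * negBinomialWeight p n m := by
  have hmono : MonotoneOn (negBinomialWeight p n) (Set.Iic m) := by
    refine monotoneOn_of_le_succ Set.ordConnected_Iic fun k _ _ hk => ?_
    simp only [Order.succ_eq_add_one, Set.mem_Iic] at hk ⊢
    refine negBinomialWeight_le_succ hp0 hp1 (le_trans ?_ hm)
    exact mul_le_mul_of_nonneg_right (by exact_mod_cast hk) hp0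
  calc ∑ k ∈ range (m + 1), negBinomialWeight p n k
      ≤ ∑ _k ∈ range (m + 1), negBinomialWeight p n m := sum_le_sum fun k hk =>
        hmono (Set.mem_Iic.2 (mem_range_succ_iff.1 hk)) (Set.mem_Iic.2 le_rfl)
          (mem_range_succ_iff.1 hk)
    _ = (m + 1) * negBinomialWeight p n m := by simp

lemma neg_log_negBinomialWeight (hp0 : 0 < p) (hp1 : p < 1) {n m : ℕ} (hn : 0 < n)
    (hm : 0 < m) :
    -log (negBinomialWeight p n m) =
      n * geomLowerTailRate (m / (n * ((1 - p) / p))) ((1 - p) / p) +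
        (log (((n + m) ^ (n + m) : ℕ) : ℝ) -
          log (((n + m - 1).choose m * m ^ m * n ^ n : ℕ) : ℝ)) := by
  have hq : 0 < 1 - p := by linarith
  have hn' : (0 : ℝ) < n := by exact_mod_cast hn
  have hm' : (0 : ℝ) < m := by exact_mod_cast hm
  have hC : (0 : ℝ) < (n + m - 1).choose m := by exact_mod_cast Nat.choose_pos (by omega)
  have hweight : log (negBinomialWeight p n m) =
      log ((n + m - 1).choose m) + n * log p + m * log (1 - p) := by
    rw [negBinomialWeight, log_mul (by positivity) (by positivity),
      log_mul (by positivity) (by positivity), log_pow, log_pow]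
  have hgap : log (((n + m) ^ (n + m) : ℕ) : ℝ) -
      log (((n + m - 1).choose m * m ^ m * n ^ n : ℕ) : ℝ) =
        (n + m) * log (n + m) - (log ((n + m - 1).choose m) + m * log m + n * log n) := by
    push_cast
    rw [log_mul (by positivity) (by positivity), log_mul (by positivity) (by positivity),
      log_pow, log_pow, log_pow]
    push_cast; ring
  have hmu_mul : (1 - p) / p * (m / (n * ((1 - p) / p))) = m / n := by field_simp
  have hlog_ratio : log (m / (n * ((1 - p) / p))) = log m - log n - log (1 - p) + log p := by
    rw [log_div hm'.ne' (by positivity), log_mul hn'.ne' (by positivity), log_div hq.ne' hp0.ne']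
    ring
  have hlog_tilt : log ((1 + m / n) / (1 + (1 - p) / p)) = log (n + m) - log n + log p := by
    rw [show (1 + m / n) / (1 + (1 - p) / p) = (n + m) / n * p by field_simp; ring,
      log_mul (by positivity) hp0.ne', log_div (by positivity) hn'.ne']
  rw [hweight, hgap, geomLowerTailRate, hmu_mul, hlog_ratio, hlog_tilt]
  field_simp
  ring

lemma abs_neg_log_sum_negBinomialWeight_sub_le (hp0 : 0 < p) (hp1 : p < 1) {n m : ℕ}
    (hn : 0 < n) (hm : 0 < m) (hmn : (m : ℝ) * p ≤ (n - 1) * (1 - p)) :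
    |-log (∑ k ∈ range (m + 1), negBinomialWeight p n k) -
        n * geomLowerTailRate (m / (n * ((1 - p) / p))) ((1 - p) / p)| ≤ 2 * log (n + m + 1) := by
  have hw := negBinomialWeight_pos hp0 hp1 hn m
  have hsum_ge : negBinomialWeight p n m ≤ ∑ k ∈ range (m + 1), negBinomialWeight p n k :=
    single_le_sum (fun k _ => negBinomialWeight_nonneg hp0.le hp1.le n k) (self_mem_range_succ m)
  have hsum_le := sum_range_negBinomialWeight_le hp0.le hp1.le hmn
  have hlog_sum_ge := log_le_log hw hsum_ge
  have hlog_sum_le : log (∑ k ∈ range (m + 1), negBinomialWeight p n k) ≤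
      log (m + 1) + log (negBinomialWeight p n m) := by
    rw [← log_mul (by positivity) hw.ne']
    exact log_le_log (hw.trans_le hsum_ge) hsum_le
  have hD : (0 : ℝ) < ((n + m - 1).choose m * m ^ m * n ^ n : ℕ) := by
    have : 0 < (n + m - 1).choose m := Nat.choose_pos (by omega)
    positivity
  have hgap_nonneg : log (((n + m - 1).choose m * m ^ m * n ^ n : ℕ) : ℝ) ≤
      log (((n + m) ^ (n + m) : ℕ) : ℝ) :=
    log_le_log hD (by exact_mod_cast Nat.choose_add_sub_one_mul_pow_mul_pow_le_add_pow n m)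
  have hgap_le : log (((n + m) ^ (n + m) : ℕ) : ℝ) ≤
      2 * log (n + m + 1) + log (((n + m - 1).choose m * m ^ m * n ^ n : ℕ) : ℝ) := by
    rw [show 2 * log ((n : ℝ) + m + 1) = log (((n : ℝ) + m + 1) ^ 2) by rw [log_pow]; norm_num,
      ← log_mul (by positivity) hD.ne']
    exact log_le_log (by positivity)
      (by exact_mod_cast Nat.add_pow_le_sq_mul_choose_add_sub_one_mul_pow_mul_pow n m hn)
  have hlog_succ : log (m + 1) ≤ log (n + m + 1) := log_le_log (by positivity) (by linarith)
  have hw_eq := neg_log_negBinomialWeight hp0 hp1 hn hm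
  rw [abs_sub_le_iff]
  constructor <;> linarith

end negBinomialWeight

section NatValued

variable {Ω : Type*} [MeasurableSpace Ω] {P : Measure Ω}

lemma measure_le_eq_sum_measure_eq {S : Ω → ℕ} (hS : Measurable S) (m : ℕ) :
    P {ω | S ω ≤ m} = ∑ k ∈ range (m + 1), P {ω | S ω = k} := by
  have hunion : {ω | S ω ≤ m} = ⋃ k ∈ range (m + 1), {ω | S ω = k} := by
    ext ω
    simp
  rw [hunion, measure_biUnion_finset]
  · exact fun i _ j _ hij => Set.disjoint_left.2 fun ω hi hj => hij (hi.symm.trans hj)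
  · exact fun k _ => hS (measurableSet_singleton k)

theorem ProbabilityTheory.IndepFun.measure_add_eq_sum {S Y : Ω → ℕ} (hS : Measurable S)
    (hY : Measurable Y) (hind : IndepFun S Y P) (k : ℕ) :
    P {ω | S ω + Y ω = k} = ∑ j ∈ range (k + 1), P {ω | S ω = k - j} * P {ω | Y ω = j} := by
  have hunion : {ω | S ω + Y ω = k} = ⋃ j ∈ range (k + 1), {ω | S ω = k - j} ∩ {ω | Y ω = j} := by
    ext ω
    simp only [Set.mem_ofPred_eq, Set.mem_iUnion, Set.mem_inter_iff, mem_range, exists_prop]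
    constructor
    · intro h; exact ⟨Y ω, by omega, by omega, rfl⟩
    · rintro ⟨j, hj, hSj, rfl⟩; omega
  rw [hunion, measure_biUnion_finset]
  · exact sum_congr rfl fun j _ => hind.measure_inter_preimage_eq_mul _ _
      (measurableSet_singleton _) (measurableSet_singleton _)
  · exact fun i _ j _ hij => Set.disjoint_left.2 fun ω hi hj => hij (hi.2.symm.trans hj.2)
  · exact fun j _ => (hS (measurableSet_singleton _)).inter (hY (measurableSet_singleton _))

end NatValued

section GeometricSums

variable {Ω : Type*} [MeasurableSpace Ω] {P : Measure Ω} {p : ℝ} {X : ℕ → Ω → ℕ}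

lemma measure_sum_range_eq_negBinomialWeight [IsProbabilityMeasure P] (hp0 : 0 ≤ p)
    (hp1 : p ≤ 1) (hmeas : ∀ i, Measurable (X i)) (hindep : iIndepFun X P)
    (hdist : ∀ i k, P {ω | X i ω = k} = ENNReal.ofReal (p * (1 - p) ^ k)) (n k : ℕ) :
    P {ω | ∑ i ∈ range n, X i ω = k} = ENNReal.ofReal (negBinomialWeight p n k) := by
  induction n generalizing k with
  | zero => rcases k with _ | k <;> simp [negBinomialWeight]
  | succ n ih =>
    have hgeom_nonneg : ∀ j : ℕ, 0 ≤ p * (1 - p) ^ j := fun j => by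
      have : 0 ≤ 1 - p := by linarith
      positivity
    calc P {ω | ∑ i ∈ range (n + 1), X i ω = k}
        = P {ω | (∑ i ∈ range n, X i) ω + X n ω = k} := by simp [sum_range_succ]
      _ = ∑ j ∈ range (k + 1), P {ω | (∑ i ∈ range n, X i) ω = k - j} * P {ω | X n ω = j} :=
          (hindep.indepFun_sum_range_succ hmeas n).measure_add_eq_sum
            (by fun_prop) (hmeas n) k
      _ = ∑ j ∈ range (k + 1),
            ENNReal.ofReal (negBinomialWeight p n (k - j) * (p * (1 - p) ^ j)) := by
          refine sum_congr rfl fun j _ => ?_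
          rw [ENNReal.ofReal_mul (negBinomialWeight_nonneg hp0 hp1 n _), ← ih, ← hdist n j]
          simp only [Finset.sum_apply]
      _ = ENNReal.ofReal (negBinomialWeight p (n + 1) k) := by
          rw [← ENNReal.ofReal_sum_of_nonneg fun j _ =>
            mul_nonneg (negBinomialWeight_nonneg hp0 hp1 n _) (hgeom_nonneg j),
            sum_negBinomialWeight_mul_geometric]

lemma measure_sum_range_le_eq_sum_negBinomialWeight [IsProbabilityMeasure P] (hp0 : 0 ≤ p)
    (hp1 : p ≤ 1) (hmeas : ∀ i, Measurable (X i)) (hindep : iIndepFun X P)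
    (hdist : ∀ i k, P {ω | X i ω = k} = ENNReal.ofReal (p * (1 - p) ^ k)) (n m : ℕ) :
    P {ω | ∑ i ∈ range n, X i ω ≤ m} =
      ENNReal.ofReal (∑ k ∈ range (m + 1), negBinomialWeight p n k) := by
  rw [measure_le_eq_sum_measure_eq (Finset.measurable_sum _ fun i _ => hmeas i),
    ENNReal.ofReal_sum_of_nonneg fun k _ => negBinomialWeight_nonneg hp0 hp1 n k]
  exact sum_congr rfl fun k _ =>
    measure_sum_range_eq_negBinomialWeight hp0 hp1 hmeas hindep hdist n k

lemma toReal_measure_sum_div_le_eq_sum_negBinomialWeight [IsProbabilityMeasure P] (hp0 : 0 ≤ p)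
    (hp1 : p ≤ 1) (hmeas : ∀ i, Measurable (X i)) (hindep : iIndepFun X P)
    (hdist : ∀ i k, P {ω | X i ω = k} = ENNReal.ofReal (p * (1 - p) ^ k)) {n : ℕ} (hn : 0 < n)
    {a : ℝ} (ha : 0 ≤ a) :
    (P {ω | (∑ i ∈ range n, (X i ω : ℝ)) / n ≤ a}).toReal =
      ∑ k ∈ range (⌊a * n⌋₊ + 1), negBinomialWeight p n k := by
  have hevent : {ω | (∑ i ∈ range n, (X i ω : ℝ)) / n ≤ a} =
      {ω | ∑ i ∈ range n, X i ω ≤ ⌊a * n⌋₊} := by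
    ext ω
    rw [Set.mem_ofPred_eq, Set.mem_ofPred_eq, Nat.le_floor_iff (by positivity),
      div_le_iff₀ (by positivity), Nat.cast_sum]
  rw [hevent, measure_sum_range_le_eq_sum_negBinomialWeight hp0 hp1 hmeas hindep hdist,
    ENNReal.toReal_ofReal (sum_nonneg fun k _ => negBinomialWeight_nonneg hp0 hp1 n k)]

end GeometricSums

lemma tendsto_log_div_natCast_of_le_mul {f : ℕ → ℝ} {C : ℝ} (hC : 0 < C)
    (hf : ∀ᶠ n in atTop, 1 ≤ f n ∧ f n ≤ C * n) :
    Tendsto (fun n : ℕ => log (f n) / n) atTop (𝓝 0) := by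
  have hlog_div : Tendsto (fun n : ℕ => (log C + log n) / n) atTop (𝓝 0) := by
    simp_rw [add_div]
    simpa using (tendsto_const_div_atTop_nhds_zero_nat (log C)).add
      (isLittleO_log_id_atTop.tendsto_div_nhds_zero.comp tendsto_natCast_atTop_atTop)
  refine squeeze_zero' ?_ ?_ hlog_div
  · filter_upwards [hf] with n hn
    exact div_nonneg (log_nonneg hn.1) n.cast_nonneg
  · filter_upwards [hf, eventually_gt_atTop 0] with n hn hn0
    have hn0' : (0 : ℝ) < n := by exact_mod_cast hn0
    rw [← log_mul hC.ne' hn0'.ne']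
    exact div_le_div_of_nonneg_right (log_le_log (by linarith [hn.1]) hn.2) hn0'.le

theorem tendsto_neg_log_sum_negBinomialWeight_div {p : ℝ} (hp0 : 0 < p) (hp1 : p < 1) {lam : ℝ}
    (hlam0 : 0 < lam) (hlam1 : lam < 1) :
    Tendsto (fun n : ℕ =>
        -log (∑ k ∈ range (⌊lam * ((1 - p) / p) * n⌋₊ + 1), negBinomialWeight p n k) / n)
      atTop (𝓝 (geomLowerTailRate lam ((1 - p) / p))) := by
  set mu := (1 - p) / p
  have hmu0 : 0 < mu := div_pos (by linarith) hp0
  set m : ℕ → ℕ := fun n => ⌊lam * mu * n⌋₊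
  have hratio : Tendsto (fun n : ℕ => (m n : ℝ) / (n * mu)) atTop (𝓝 lam) := by
    have := ((tendsto_nat_floor_mul_div_atTop (by positivity : 0 ≤ lam * mu)).comp
      tendsto_natCast_atTop_atTop).div_const mu
    rw [mul_div_cancel_right₀ _ hmu0.ne'] at this
    simpa only [Function.comp_def, div_div] using this
  have hrate : Tendsto (fun n : ℕ => geomLowerTailRate (m n / (n * mu)) mu) atTop
      (𝓝 (geomLowerTailRate lam mu)) :=
    (continuousAt_geomLowerTailRate mu hlam0 hmu0).tendsto.comp hratio
  have herr : Tendsto (fun n : ℕ => 2 * log (n + m n + 1) / n) atTop (𝓝 0) := by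
    simp_rw [mul_div_assoc]
    simpa using (tendsto_log_div_natCast_of_le_mul (C := lam * mu + 2) (by positivity) <|
      (eventually_ge_atTop 1).mono fun n hn => by
        have hfloor : (m n : ℝ) ≤ lam * mu * n := Nat.floor_le (by positivity)
        have : (1 : ℝ) ≤ n := by exact_mod_cast hn
        constructor <;> nlinarith).const_mul 2
  have hm_pos : ∀ᶠ n : ℕ in atTop, 0 < m n :=
    ((tendsto_natCast_atTop_atTop.const_mul_atTop (by positivity : 0 < lam * mu)).eventually_ge_atTop
      1).mono fun n hn => Nat.floor_pos.2 hn
  -- `m n` stays below the mode of `negBinomialWeight p n`.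
  have hm_small : ∀ᶠ n : ℕ in atTop, (m n : ℝ) * p ≤ (n - 1) * (1 - p) :=
    ((tendsto_natCast_atTop_atTop.const_mul_atTop (by linarith : 0 < 1 - lam)).eventually_ge_atTop
      1).mono fun n hn => by
        have hfloor : (m n : ℝ) ≤ lam * mu * n := Nat.floor_le (by positivity)
        have hmu_p : mu * p = 1 - p := div_mul_cancel₀ _ hp0.ne'
        nlinarith
  refine tendsto_of_tendsto_of_dist hrate
    (squeeze_zero' (Eventually.of_forall fun n => dist_nonneg) ?_ herr)
  filter_upwards [eventually_gt_atTop 0, hm_pos, hm_small] with n hn hmn hm_le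
  have hn' : (0 : ℝ) < n := by exact_mod_cast hn
  rw [dist_comm, Real.dist_eq, ← mul_div_cancel_left₀ (geomLowerTailRate _ mu) hn'.ne',
    ← sub_div, abs_div, abs_of_pos hn']
  exact div_le_div_of_nonneg_right
    (abs_neg_log_sum_negBinomialWeight_sub_le hp0 hp1 hn hmn hm_le) hn'.le

theorem geometric_lower_tail_asymptotics
    {Omega : Type*} [MeasurableSpace Omega] (P : Measure Omega) [IsProbabilityMeasure P]
    (p : ℝ) (hp : p ∈ Set.Ioo (0 : ℝ) 1) (X : ℕ → Omega → ℕ)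
    (hmeas : ∀ i, Measurable (X i))
    (hindep : iIndepFun X P)
    (hdist : ∀ i k, P {omega | X i omega = k} = ENNReal.ofReal (p * (1 - p) ^ k))
    (mu : ℝ) (hmu : mu = (1 - p) / p)
    (lam : ℝ) (hlam : lam ∈ Set.Ioo (0 : ℝ) 1) :
    Tendsto (fun n : ℕ =>
        -Real.log ((P {omega | (∑ i ∈ Finset.range n, (X i omega : ℝ)) / n ≤ lam * mu}).toReal) /
          ((n : ℝ) * (mu * lam * Real.log lam - (1 + mu * lam) * Real.log ((1 + mu * lam) / (1 + mu)))))
      atTop (nhds 1) := by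
  obtain ⟨hp0, hp1⟩ := hp
  obtain ⟨hlam0, hlam1⟩ := hlam
  subst hmu
  have hrate_ne : geomLowerTailRate lam ((1 - p) / p) ≠ 0 :=
    (geomLowerTailRate_pos (div_pos (by linarith) hp0) hlam0 hlam1.ne).ne'
  have hlim := (tendsto_neg_log_sum_negBinomialWeight_div hp0 hp1 hlam0 hlam1).div_const
    (geomLowerTailRate lam ((1 - p) / p))
  rw [div_self hrate_ne] at hlim
  refine hlim.congr' ((eventually_gt_atTop 0).mono fun n hn => ?_)
  have : 0 ≤ 1 - p := by linarith
  dsimp only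
  rw [toReal_measure_sum_div_le_eq_sum_negBinomialWeight hp0.le hp1.le hmeas hindep hdist hn
    (by positivity), div_div, geomLowerTailRate]
end

section
/- Let ρ > 0, μ = 1/ρ, and let Y₁,Y₂,… be an infinite sequence of independent, identically distributed exponential random variables with density p(y) = ρe^{−ρy} on [0,∞); let Ȳₙ = (Y₁+⋯+Yₙ)/n. Then for every fixed λ ∈ (0,1), the limit as n → ∞ of (−ln Pr[Ȳₙ ≤ λμ]) / (n·G(λ)) equals 1, where G(λ) = λ − 1 − ln λ. -/
/-!
The sum of `n` independent `Exp(ρ)` variables has law `Gamma(n, ρ)`, since convolving a gamma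
density of shape `a` with the exponential density raises the shape to `a + 1`. So the probability
in question is `Q_n = Gamma(n, ρ)(Iic t)` with `ρ t = n λ`, and it suffices to show
`exp (-n G(λ)) / (e √n) ≤ Q_n ≤ exp (-n G(λ))`, i.e. `n G ≤ -log Q_n ≤ n G + 1 + (log n) / 2`.

The upper bound is a Chernoff bound: tilting the `Gamma(n, ρ)` density by `exp ((s - ρ) x)`
gives the `Gamma(n, s)` density up to the factor `(ρ / s)^n`, and `s = ρ / λ` makes the bound
exactly `exp (-n G(λ))`. For the lower bound, replacing `exp (-ρ x)` by `exp (-ρ t)` on `[0, t]`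
gives `Q_n ≥ exp (-n λ) (n λ)^n / n!`, and the Stirling bound `n! ≤ e √n (n / e)^n` turns this
into `exp (-n G(λ)) / (e √n)`.
-/

open MeasureTheory ProbabilityTheory Real Filter Set
open scoped ENNReal Topology Nat

lemma lintegral_Icc_ofReal_rpow_sub_one {a x : ℝ} (ha : 0 < a) (hx : 0 ≤ x) :
    ∫⁻ y in Icc 0 x, ENNReal.ofReal (y ^ (a - 1)) = ENNReal.ofReal (x ^ a / a) := by
  have hint : IntegrableOn (fun y : ℝ => y ^ (a - 1)) (Icc 0 x) := by
    rw [integrableOn_Icc_iff_integrableOn_Ioc, ← intervalIntegrable_iff_integrableOn_Ioc_of_le hx]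
    exact intervalIntegral.intervalIntegrable_rpow' (by linarith)
  rw [← ofReal_integral_eq_lintegral_ofReal hint
      ((ae_restrict_iff' measurableSet_Icc).mpr (ae_of_all _ fun y hy => rpow_nonneg hy.1 _)),
    integral_Icc_eq_integral_Ioc, ← intervalIntegral.integral_of_le hx,
    integral_rpow (Or.inl (by linarith)), sub_add_cancel, zero_rpow ha.ne', sub_zero]

lemma Stirling.factorial_le_exp_one_mul_sqrt_mul_pow {n : ℕ} (hn : n ≠ 0) :
    (n ! : ℝ) ≤ exp 1 * √n * (n / exp 1) ^ n := by
  obtain ⟨m, rfl⟩ := Nat.exists_eq_succ_of_ne_zero hn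
  have h := stirlingSeq'_antitone (Nat.zero_le m)
  simp only [Function.comp_apply, Nat.succ_eq_add_one, zero_add, stirlingSeq_one] at h
  rw [stirlingSeq, div_le_iff₀ (by positivity)] at h
  refine h.trans_eq ?_
  rw [sqrt_mul zero_le_two]
  field_simp

lemma tendsto_neg_log_div_of_exp_bounds {G C : ℝ} (hG : 0 < G) (hC : 0 < C) {q : ℕ → ℝ}
    (hlow : ∀ᶠ n : ℕ in atTop, exp (-(n * G)) / (C * √n) ≤ q n)
    (hup : ∀ᶠ n : ℕ in atTop, q n ≤ exp (-(n * G))) :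
    Tendsto (fun n : ℕ => -log (q n) / (n * G)) atTop (𝓝 1) := by
  have hlog : Tendsto (fun n : ℕ => log n / (2 * G * n)) atTop (𝓝 0) := by
    simpa [Function.comp_def] using (tendsto_pow_log_div_mul_add_atTop (2 * G) 0 1
      (by positivity)).comp tendsto_natCast_atTop_atTop
  have hinv : Tendsto (fun n : ℕ => log C / G * (n : ℝ)⁻¹) atTop (𝓝 0) := by
    simpa [Function.comp_def] using
      (tendsto_inv_atTop_zero.comp tendsto_natCast_atTop_atTop).const_mul (log C / G)
  have hupper := (tendsto_const_nhds (x := (1 : ℝ))).add (hinv.add hlog)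
  rw [add_zero, add_zero] at hupper
  refine tendsto_of_tendsto_of_tendsto_of_le_of_le' tendsto_const_nhds hupper ?_ ?_
  all_goals filter_upwards [hlow, hup, eventually_gt_atTop 0] with n hlow hup hn
  all_goals
    have hn' : (0 : ℝ) < n := Nat.cast_pos.2 hn
    have hq : 0 < q n := lt_of_lt_of_le (by positivity) hlow
  · rw [le_div_iff₀ (by positivity), one_mul, le_neg, ← log_exp (-(n * G))]
    exact log_le_log hq hup
  · have hlog_low := log_le_log (by positivity) hlow
    rw [log_div (by positivity) (by positivity), log_exp, log_mul hC.ne' (by positivity),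
      log_sqrt hn'.le] at hlog_low
    have hexpand : (1 + (log C / G * (n : ℝ)⁻¹ + log n / (2 * G * n))) * (n * G)
        = n * G + log C + log n / 2 := by
      field_simp
      ring
    rw [div_le_iff₀ (by positivity), hexpand]
    linarith

namespace ProbabilityTheory

lemma gammaPDF_lconvolution_gammaPDF_one {a r : ℝ} (ha : 0 < a) (hr : 0 ≤ r) (x : ℝ) :
    (gammaPDF a r ⋆ₗ gammaPDF 1 r) x = gammaPDF (a + 1) r x := by
  rw [lconvolution_def]
  rcases lt_or_ge x 0 with hx | hx
  · have hzero : ∀ y, gammaPDF a r y * gammaPDF 1 r (-y + x) = 0 := fun y => by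
      rcases lt_or_ge y 0 with hy | hy
      · rw [gammaPDF_of_neg hy, zero_mul]
      · rw [gammaPDF_of_neg (show -y + x < 0 by linarith), mul_zero]
    simp only [hzero, lintegral_zero, gammaPDF_of_neg hx]
  have hΓ := Gamma_pos_of_pos ha
  set C := r ^ a / Gamma a * r * exp (-(r * x))
  have hC : 0 ≤ C := by positivity
  have hintegrand : ∀ y, gammaPDF a r y * gammaPDF 1 r (-y + x)
      = (Icc 0 x).indicator (fun y => ENNReal.ofReal (C * y ^ (a - 1))) y := fun y => by
    rcases lt_or_ge y 0 with hy | hy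
    · rw [gammaPDF_of_neg hy, zero_mul, indicator_of_notMem (fun h => hy.not_ge h.1)]
    rcases lt_or_ge x y with hxy | hxy
    · rw [gammaPDF_of_neg (show -y + x < 0 by linarith), mul_zero,
        indicator_of_notMem (fun h => hxy.not_ge h.2)]
    rw [indicator_of_mem (show y ∈ Icc 0 x from ⟨hy, hxy⟩), gammaPDF_of_nonneg hy,
      gammaPDF_of_nonneg (by linarith), ← ENNReal.ofReal_mul (by positivity)]
    congr 1
    simp only [C, rpow_one, Gamma_one, div_one, sub_self, rpow_zero, mul_one]
    have hexp : exp (-(r * y)) * exp (-(r * (-y + x))) = exp (-(r * x)) := by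
      rw [← exp_add]; ring_nf
    linear_combination (r ^ a / Gamma a * y ^ (a - 1) * r) * hexp
  simp_rw [hintegrand]
  rw [lintegral_indicator measurableSet_Icc]
  simp_rw [ENNReal.ofReal_mul hC]
  rw [lintegral_const_mul' _ _ ENNReal.ofReal_ne_top, lintegral_Icc_ofReal_rpow_sub_one ha hx,
    ← ENNReal.ofReal_mul hC, gammaPDF_of_nonneg hx, add_sub_cancel_right,
    Gamma_add_one ha.ne', rpow_add_one' hr (by linarith)]
  congr 1
  simp only [C]
  field_simp

lemma gammaMeasure_conv_expMeasure {a r : ℝ} (ha : 0 < a) (hr : 0 ≤ r) :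
    gammaMeasure a r ∗ expMeasure r = gammaMeasure (a + 1) r := by
  rw [expMeasure, gammaMeasure, gammaMeasure, gammaMeasure,
    conv_withDensity_eq_lconvolution (f := gammaPDF a r) (g := gammaPDF 1 r)
      (measurable_gammaPDFReal a r).ennreal_ofReal (measurable_gammaPDFReal 1 r).ennreal_ofReal]
  congr 1
  funext x
  exact gammaPDF_lconvolution_gammaPDF_one ha hr x

section IIDExponential

variable {Ω : Type*} [MeasurableSpace Ω] {P : Measure Ω} [IsFiniteMeasure P] {r : ℝ}
  {Y : ℕ → Ω → ℝ}

lemma map_sum_range_succ_eq_gammaMeasure (hr : 0 ≤ r) (hmeas : ∀ i, Measurable (Y i))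
    (hindep : iIndepFun Y P) (hdist : ∀ i, P.map (Y i) = expMeasure r) (n : ℕ) :
    P.map (fun ω => ∑ i ∈ Finset.range (n + 1), Y i ω) = gammaMeasure (n + 1) r := by
  induction n with
  | zero => simpa [expMeasure] using hdist 0
  | succ n ih =>
    have hsum : (fun ω => ∑ i ∈ Finset.range (n + 1 + 1), Y i ω)
        = (fun ω => ∑ i ∈ Finset.range (n + 1), Y i ω) + Y (n + 1) := by
      ext ω; simp [Finset.sum_range_succ _ (n + 1)]
    have hindep_last : IndepFun (fun ω => ∑ i ∈ Finset.range (n + 1), Y i ω) (Y (n + 1)) P := by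
      simpa only [Finset.sum_fn] using hindep.indepFun_finsetSum_of_notMem hmeas (by simp)
    rw [hsum, hindep_last.map_add_eq_map_conv_map (Finset.measurable_sum _ fun i _ => hmeas i)
      (hmeas _), ih, hdist, gammaMeasure_conv_expMeasure (by positivity) hr]
    push_cast
    ring_nf

lemma measure_sum_range_div_le_eq_gammaMeasure (hr : 0 ≤ r) (hmeas : ∀ i, Measurable (Y i))
    (hindep : iIndepFun Y P) (hdist : ∀ i, P.map (Y i) = expMeasure r) {n : ℕ} (hn : n ≠ 0)
    (x : ℝ) :
    P {ω | (∑ i ∈ Finset.range n, Y i ω) / n ≤ x} = gammaMeasure n r (Iic (n * x)) := by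
  obtain ⟨m, rfl⟩ := Nat.exists_eq_succ_of_ne_zero hn
  have hset : {ω | (∑ i ∈ Finset.range (m + 1), Y i ω) / (m + 1 : ℕ) ≤ x}
      = (fun ω => ∑ i ∈ Finset.range (m + 1), Y i ω) ⁻¹' Iic ((m + 1 : ℕ) * x) := by
    ext ω
    rw [mem_ofPred_eq, mem_preimage, mem_Iic, div_le_iff₀ (by positivity), mul_comm]
  rw [hset, ← Measure.map_apply (Finset.measurable_sum _ fun i _ => hmeas i) measurableSet_Iic,
    map_sum_range_succ_eq_gammaMeasure hr hmeas hindep hdist]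
  push_cast
  rfl

end IIDExponential

lemma gammaPDFReal_eq_mul_gammaPDFReal {a r s : ℝ} (hr : 0 ≤ r) (hs : 0 < s) (x : ℝ) :
    gammaPDFReal a r x = (r / s) ^ a * exp ((s - r) * x) * gammaPDFReal a s x := by
  unfold gammaPDFReal
  split_ifs
  · have hexp : exp ((s - r) * x) * exp (-(s * x)) = exp (-(r * x)) := by
      rw [← exp_add]; ring_nf
    have := (rpow_pos_of_pos hs a).ne'
    rw [div_rpow hr hs.le, ← hexp]
    field_simp
  · simp

lemma gammaMeasure_Iic_le {a r s : ℝ} (ha : 0 < a) (hr : 0 ≤ r) (hs : 0 < s) (hrs : r ≤ s)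
    (t : ℝ) : gammaMeasure a r (Iic t) ≤ ENNReal.ofReal ((r / s) ^ a * exp ((s - r) * t)) := by
  calc gammaMeasure a r (Iic t) = ∫⁻ x in Iic t, gammaPDF a r x :=
        withDensity_apply _ measurableSet_Iic
    _ ≤ ∫⁻ x in Iic t, ENNReal.ofReal ((r / s) ^ a * exp ((s - r) * t)) * gammaPDF a s x := by
        refine setLIntegral_mono' measurableSet_Iic fun x hx => ?_
        rw [gammaPDF, gammaPDF, ← ENNReal.ofReal_mul (by positivity),
          gammaPDFReal_eq_mul_gammaPDFReal hr hs]
        have := gammaPDFReal_nonneg ha hs x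
        have := sub_nonneg.2 hrs
        gcongr
        exact hx
    _ ≤ ∫⁻ x, ENNReal.ofReal ((r / s) ^ a * exp ((s - r) * t)) * gammaPDF a s x :=
        setLIntegral_le_lintegral _ _
    _ = ENNReal.ofReal ((r / s) ^ a * exp ((s - r) * t)) := by
        rw [lintegral_const_mul' _ _ ENNReal.ofReal_ne_top, lintegral_gammaPDF_eq_one ha hs,
          mul_one]

lemma gammaMeasure_Iic_mul_div_le {a r c : ℝ} (ha : 0 < a) (hr : 0 < r) (hc0 : 0 < c)
    (hc1 : c ≤ 1) :
    gammaMeasure a r (Iic (a * c / r)) ≤ ENNReal.ofReal (exp (-(a * (c - 1 - log c)))) := by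
  convert gammaMeasure_Iic_le ha hr.le (div_pos hr hc0) (le_div_self hr.le hc0 hc1) (a * c / r)
    using 2
  rw [div_div_cancel₀ hr.ne', rpow_def_of_pos hc0, ← exp_add]
  congr 1
  field_simp
  ring

lemma ofReal_le_gammaMeasure_Iic {a r t : ℝ} (ha : 0 < a) (hr : 0 ≤ r) (ht : 0 ≤ t) :
    ENNReal.ofReal (exp (-(r * t)) * (r * t) ^ a / Gamma (a + 1)) ≤ gammaMeasure a r (Iic t) := by
  have hΓ := Gamma_pos_of_pos ha
  calc ENNReal.ofReal (exp (-(r * t)) * (r * t) ^ a / Gamma (a + 1))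
        = ∫⁻ x in Icc 0 t, ENNReal.ofReal (r ^ a / Gamma a * exp (-(r * t)))
            * ENNReal.ofReal (x ^ (a - 1)) := by
        rw [lintegral_const_mul' _ _ ENNReal.ofReal_ne_top, lintegral_Icc_ofReal_rpow_sub_one ha ht,
          ← ENNReal.ofReal_mul (by positivity), Gamma_add_one ha.ne', mul_rpow hr ht]
        congr 1
        field_simp
    _ ≤ ∫⁻ x in Icc 0 t, gammaPDF a r x := by
        refine setLIntegral_mono' measurableSet_Icc fun x hx => ?_
        rw [gammaPDF_of_nonneg hx.1, ← ENNReal.ofReal_mul (by positivity)]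
        apply ENNReal.ofReal_le_ofReal
        rw [mul_right_comm]
        gcongr
        · exact mul_nonneg (div_nonneg (rpow_nonneg hr _) hΓ.le) (rpow_nonneg hx.1 _)
        · exact hx.2
    _ ≤ ∫⁻ x in Iic t, gammaPDF a r x := lintegral_mono_set Icc_subset_Iic_self
    _ = gammaMeasure a r (Iic t) := (withDensity_apply _ measurableSet_Iic).symm

lemma ofReal_exp_neg_mul_div_le_gammaMeasure_natCast_Iic {n : ℕ} (hn : n ≠ 0) {r c : ℝ}
    (hr : 0 < r) (hc : 0 < c) :
    ENNReal.ofReal (exp (-(n * (c - 1 - log c))) / (exp 1 * √n))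
      ≤ gammaMeasure n r (Iic (n * c / r)) := by
  refine le_trans (ENNReal.ofReal_le_ofReal ?_)
    (ofReal_le_gammaMeasure_Iic (Nat.cast_pos.2 (Nat.pos_of_ne_zero hn)) hr.le (by positivity))
  rw [mul_div_cancel₀ _ hr.ne', rpow_natCast, Gamma_nat_eq_factorial]
  have hcn : c ^ n = exp (n * log c) := by rw [← rpow_natCast, rpow_def_of_pos hc, mul_comm]
  have hen : exp 1 ^ n = exp n := by rw [← exp_nat_mul, mul_one]
  calc exp (-(n * (c - 1 - log c))) / (exp 1 * √n)
      = exp (-(n * c)) * c ^ n * exp 1 ^ n / (exp 1 * √n) := by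
        rw [hcn, hen, ← exp_add, ← exp_add]
        congr 2
        ring
    _ = exp (-(n * c)) * (n * c) ^ n / (exp 1 * √n * (n / exp 1) ^ n) := by
        rw [mul_pow, div_pow]
        field_simp
    _ ≤ exp (-(n * c)) * (n * c) ^ n / n ! := by
        gcongr
        exact Stirling.factorial_le_exp_one_mul_sqrt_mul_pow hn

end ProbabilityTheory

theorem exponential_lower_tail_asymptotics
    {Omega : Type*} [MeasurableSpace Omega] (P : Measure Omega) [IsProbabilityMeasure P]
    (rho : ℝ) (hrho : 0 < rho) (Y : ℕ → Omega → ℝ)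
    (hmeas : ∀ i, Measurable (Y i))
    (hindep : iIndepFun Y P)
    (hdist : ∀ i, Measure.map (Y i) P = expMeasure rho)
    (mu : ℝ) (hmu : mu = 1 / rho)
    (lam : ℝ) (hlam : lam ∈ Set.Ioo (0 : ℝ) 1) :
    Tendsto (fun n : ℕ =>
        -Real.log ((P {omega | (∑ i ∈ Finset.range n, Y i omega) / n ≤ lam * mu}).toReal) /
          ((n : ℝ) * (lam - 1 - Real.log lam)))
      atTop (nhds 1) := by
  obtain ⟨hlam0, hlam1⟩ := hlam
  have hprob : ∀ n : ℕ, n ≠ 0 → P {ω | (∑ i ∈ Finset.range n, Y i ω) / n ≤ lam * mu}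
      = gammaMeasure n rho (Iic (n * lam / rho)) := fun n hn => by
    rw [measure_sum_range_div_le_eq_gammaMeasure hrho.le hmeas hindep hdist hn, hmu, mul_one_div,
      mul_div_assoc]
  refine tendsto_neg_log_div_of_exp_bounds (by linarith [log_lt_sub_one_of_pos hlam0 hlam1.ne])
    (exp_pos 1) ?_ ?_
  all_goals filter_upwards [eventually_ne_atTop 0] with n hn
  all_goals have := isProbabilityMeasure_gammaMeasure (Nat.cast_pos.2 (Nat.pos_of_ne_zero hn)) hrho
  · rw [hprob n hn, ← ENNReal.ofReal_le_iff_le_toReal (measure_ne_top _ _)]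
    exact ofReal_exp_neg_mul_div_le_gammaMeasure_natCast_Iic hn hrho hlam0
  · rw [hprob n hn]
    exact ENNReal.toReal_le_of_le_ofReal (exp_pos _).le
      (gammaMeasure_Iic_mul_div_le (by positivity) hrho hlam0 hlam1.le)
end

section
/- For all λ, μ > 0, the function H(λ,μ) = μλ·ln λ − (1+μλ)·ln((1+μλ)/(1+μ)) satisfies H(λ,μ) ≥ 0, with equality if and only if λ = 1. -/
open MeasureTheory ProbabilityTheory Real Filter

/-!
Put `r = (1 + μ) / (1 + μλ)`. `H(λ, μ)` is `1 + μλ` times the Kullback–Leibler divergence between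
the Bernoulli laws of parameters `μλ / (1 + μλ)` and `μ / (1 + μ)`; written with
`klFun x = x log x + 1 - x ≥ 0` this is `H = (μ klFun (λr) + klFun r) / r`. Both terms are
nonnegative, and `klFun r = 0` only when `r = 1`, that is `λ = 1`.
-/

open InformationTheory

lemma H_eq_klFun {lam mu : ℝ} (hlam : lam ≠ 0) (h1mu : 1 + mu ≠ 0) (h1mulam : 1 + mu * lam ≠ 0) :
    mu * lam * log lam - (1 + mu * lam) * log ((1 + mu * lam) / (1 + mu)) =
      (1 + mu * lam) / (1 + mu) *
        (mu * klFun (lam * ((1 + mu) / (1 + mu * lam))) + klFun ((1 + mu) / (1 + mu * lam))) := by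
  have hr : (1 + mu) / (1 + mu * lam) ≠ 0 := div_ne_zero h1mu h1mulam
  rw [klFun_apply, klFun_apply, log_mul hlam hr, ← inv_div, log_inv]
  field_simp
  ring

lemma klFun_one_add_div_one_add_mul_eq_zero_iff {lam mu : ℝ} (hlam : 0 < lam) (hmu : 0 < mu) :
    klFun ((1 + mu) / (1 + mu * lam)) = 0 ↔ lam = 1 := by
  have h1mulam : 0 < 1 + mu * lam := by positivity
  rw [klFun_eq_zero_iff (by positivity), div_eq_one_iff_eq h1mulam.ne']
  constructor
  · intro h
    nlinarith
  · rintro rfl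
    ring

theorem H_nonneg_eq_zero_iff (lam mu : ℝ) (hlam : 0 < lam) (hmu : 0 < mu) :
    0 ≤ (mu * lam * Real.log lam - (1 + mu * lam) * Real.log ((1 + mu * lam) / (1 + mu))) ∧ ((mu * lam * Real.log lam - (1 + mu * lam) * Real.log ((1 + mu * lam) / (1 + mu))) = 0 ↔ lam = 1) := by
  have h1mulam : 0 < 1 + mu * lam := by positivity
  rw [H_eq_klFun hlam.ne' (by positivity) h1mulam.ne']
  set r := (1 + mu) / (1 + mu * lam)
  have hr : 0 ≤ r := by positivity
  have hkl_lam_r : 0 ≤ mu * klFun (lam * r) := mul_nonneg hmu.le (klFun_nonneg (by positivity))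
  have hkl_r : 0 ≤ klFun r := klFun_nonneg hr
  have hweight : 0 < (1 + mu * lam) / (1 + mu) := by positivity
  refine ⟨mul_nonneg hweight.le (add_nonneg hkl_lam_r hkl_r), ?_⟩
  rw [mul_eq_zero, or_iff_right hweight.ne', add_eq_zero_iff_of_nonneg hkl_lam_r hkl_r]
  constructor
  · exact fun h => (klFun_one_add_div_one_add_mul_eq_zero_iff hlam hmu).1 h.2
  · intro h
    have hkl_r_zero : klFun r = 0 := (klFun_one_add_div_one_add_mul_eq_zero_iff hlam hmu).2 h
    simp [h, hkl_r_zero]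
end

section
/- For every λ ≥ 3, one has H(λ, 1/λ) = ln((2 + λ + 1/λ)/4) ≥ (1/4)·ln λ; moreover, for every λ with 0 < λ ≤ 1/3, one has H(λ, 1/λ) = ln((2 + λ + 1/λ)/4) ≥ (1/4)·ln(1/λ), where H(λ,μ) = μλ·ln λ − (1+μλ)·ln((1+μλ)/(1+μ)). -/
open MeasureTheory ProbabilityTheory Real Filter

lemma H_key (s : ℝ) (hs : 3 ≤ s) : 256 * s^5 ≤ (1+s)^8 := by
  nlinarith [sq_nonneg (s-3), sq_nonneg s, pow_pos (lt_of_lt_of_le (by norm_num) hs : (0:ℝ)<s) 3, sq_nonneg (s^2-3*s), sq_nonneg (s^3-3*s^2), sq_nonneg ((s-3)*s), sq_nonneg ((s-3)*s^2), sq_nonneg ((s-3)*s^3), mul_nonneg (mul_nonneg (sub_nonneg.2 hs) (sub_nonneg.2 hs)) (sub_nonneg.2 hs)]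

lemma H_ineq (x : ℝ) (hx : 3 ≤ x) : 1/4 * Real.log x ≤ Real.log ((2+x+1/x)/4) := by
  have hx0 : (0:ℝ) < x := by linarith
  have hpos : (0:ℝ) < (2+x+1/x)/4 := by positivity
  have h1 : x ≤ ((2+x+1/x)/4)^4 := by
    have e : (2+x+1/x)/4 = (x+1)^2/(4*x) := by field_simp; ring
    rw [e, div_pow, le_div_iff₀ (by positivity)]
    have hk := H_key x hx
    have e1 : ((x+1)^2)^4 = (1+x)^8 := by ring
    nlinarith [hk]
  have hlog := Real.log_le_log hx0 h1
  rw [Real.log_pow] at hlog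
  push_cast at hlog
  linarith

lemma H_eq (lam : ℝ) (h : 0 < lam) :
    ((1 / lam) * lam * Real.log lam - (1 + (1 / lam) * lam) * Real.log ((1 + (1 / lam) * lam) / (1 + (1 / lam)))) = Real.log ((2 + lam + 1 / lam) / 4) := by
  have h1 : (1:ℝ)/lam * lam = 1 := by field_simp
  rw [h1]
  have hp : (0:ℝ) < 1 + 1/lam := by positivity
  have e : (2+lam+1/lam)/4 = lam * ((1+1/lam)/2)^2 := by field_simp; ring
  rw [e, Real.log_mul h.ne' (by positivity), Real.log_pow,
    Real.log_div hp.ne' two_ne_zero, Real.log_div (by norm_num : (1:ℝ)+1 ≠ 0) hp.ne']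
  have : Real.log (1+1) = Real.log 2 := by norm_num
  rw [this]
  ring

theorem H_at_mu_inv_lam (lam : ℝ) :
    (3 ≤ lam →
      ((1 / lam) * lam * Real.log lam - (1 + (1 / lam) * lam) * Real.log ((1 + (1 / lam) * lam) / (1 + (1 / lam)))) = Real.log ((2 + lam + 1 / lam) / 4) ∧
      1 / 4 * Real.log lam ≤ ((1 / lam) * lam * Real.log lam - (1 + (1 / lam) * lam) * Real.log ((1 + (1 / lam) * lam) / (1 + (1 / lam))))) ∧
    (0 < lam → lam ≤ 1 / 3 →
      ((1 / lam) * lam * Real.log lam - (1 + (1 / lam) * lam) * Real.log ((1 + (1 / lam) * lam) / (1 + (1 / lam)))) = Real.log ((2 + lam + 1 / lam) / 4) ∧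
      1 / 4 * Real.log (1 / lam) ≤ ((1 / lam) * lam * Real.log lam - (1 + (1 / lam) * lam) * Real.log ((1 + (1 / lam) * lam) / (1 + (1 / lam))))) := by
  constructor
  · intro h3
    have h0 : (0:ℝ) < lam := by linarith
    have heq := H_eq lam h0
    exact ⟨heq, heq ▸ H_ineq lam h3⟩
  · intro h0 h13
    have heq := H_eq lam h0
    refine ⟨heq, ?_⟩
    have hs : 3 ≤ 1/lam := by
      rw [le_div_iff₀ h0]; linarith
    have := H_ineq (1/lam) hs
    rw [one_div_one_div] at this
    rw [heq]
    calc 1/4 * Real.log (1/lam) ≤ Real.log ((2+1/lam+lam)/4) := this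
      _ = Real.log ((2+lam+1/lam)/4) := by ring_nf
end
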